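/- arXiv:2008.08348 — 8 statements merged into one kernel-verified Lean document; each statement's English description precedes it below -/
import Mathlib

section
/- Let b : ℝ → ℝ be locally Lipschitz, nonnegative and nondecreasing, let t₀ ∈ ℝ and α, β > 0, and set T(α,β) := ∫_α^∞ ds / (β² + 2∫_α^s b(r) dr)^{1/2} (with the convention 1/0 = ∞). If T₁ > 0 and y : [t₀, t₀ + T₁) → ℝ is continuous and satisfies y(t) = α + β(t − t₀) + ∫_{t₀}^t (t − s) b(y(s)) ds for all t ∈ [t₀, t₀ + T₁), then T₁ ≤ T(α,β). -/
/-! Along a solution the velocity `v = y'` stays `≥ β > 0`, and since `y'' = b(y)` the energy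
`v² - 2∫_α^y b` is conserved, so `v = √(β² + 2∫_α^y b)`. Substituting `u = y(t)` in
`t - t₀ = ∫_{t₀}^t v / √(β² + 2∫_α^{y} b)` writes the elapsed time as `∫_α^{y(t)}` of the
integrand of `T(α,β)`, hence every `t < t₀ + T₁` satisfies `t - t₀ ≤ T(α,β)`. -/

open MeasureTheory Set

/-- `T(α,β) = ∫_α^∞ ds / (β² + 2∫_α^s b(r) dr)^{1/2}`, valued in `[0,∞]`
(with the convention `1/0 = ∞`, which is irrelevant here since the integrand's
denominator is positive when `β > 0`). -/
noncomputable def blowupTime (b : ℝ → ℝ) (α β : ℝ) : ENNReal :=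
  ∫⁻ s in Set.Ioi α, ENNReal.ofReal (1 / Real.sqrt (β ^ 2 + 2 * ∫ r in α..s, b r))

theorem ofReal_integral_le_lintegral_ofReal {α : Type*} [MeasurableSpace α] {μ : Measure α}
    {f : α → ℝ} (hf : 0 ≤ᵐ[μ] f) :
    ENNReal.ofReal (∫ x, f x ∂μ) ≤ ∫⁻ x, ENNReal.ofReal (f x) ∂μ := by
  by_cases hfi : Integrable f μ
  · exact (ofReal_integral_eq_lintegral_ofReal hfi hf).le
  · simp [integral_undef hfi]

theorem ofReal_intervalIntegral_le_lintegral_Ioi {f : ℝ → ℝ} (hf : ∀ u, 0 ≤ f u) (a z : ℝ) :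
    ENNReal.ofReal (∫ u in a..z, f u) ≤ ∫⁻ u in Ioi a, ENNReal.ofReal (f u) := by
  rcases le_total a z with haz | hza
  · rw [intervalIntegral.integral_of_le haz]
    exact (ofReal_integral_le_lintegral_ofReal (ae_of_all _ hf)).trans
      (lintegral_mono_set Ioc_subset_Ioi_self)
  · rw [intervalIntegral.integral_symm, ENNReal.ofReal_eq_zero.2
      (neg_nonpos.2 (intervalIntegral.integral_nonneg_of_forall hza hf))]
    positivity

section

variable {f : ℝ → ℝ} {a c x : ℝ}

theorem hasDerivAt_integral_of_continuousOn_Ico (hf : ContinuousOn f (Ico a c))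
    (hx : x ∈ Ioo a c) : HasDerivAt (fun t => ∫ s in a..t, f s) (f x) x :=
  intervalIntegral.integral_hasDerivAt_right
    ((hf.mono (Icc_subset_Ico_right hx.2)).intervalIntegrable_of_Icc hx.1.le)
    ((hf.mono Ioo_subset_Ico_self).stronglyMeasurableAtFilter isOpen_Ioo x hx)
    (hf.continuousAt (Ico_mem_nhds hx.1 hx.2))

theorem hasDerivAt_integral_sub_mul (hf : ContinuousOn f (Ico a c)) (hx : x ∈ Ioo a c) :
    HasDerivAt (fun t => ∫ s in a..t, (t - s) * f s) (∫ s in a..x, f s) x := by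
  have hsplit : HasDerivAt (fun t => t * (∫ s in a..t, f s) - ∫ s in a..t, s * f s)
      (∫ s in a..x, f s) x :=
    (((hasDerivAt_id' x).mul (hasDerivAt_integral_of_continuousOn_Ico hf hx)).sub
      (hasDerivAt_integral_of_continuousOn_Ico (f := fun s => s * f s)
        ((continuousOn_id' _).mul hf) hx)).congr_deriv
      (by ring)
  refine hsplit.congr_of_eventuallyEq ?_
  filter_upwards [Ioo_mem_nhds hx.1 hx.2] with t ht
  have hIcc : Icc a t ⊆ Ico a c := Icc_subset_Ico_right ht.2
  have hint : IntervalIntegrable f volume a t := (hf.mono hIcc).intervalIntegrable_of_Icc ht.1.le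
  have hint' : IntervalIntegrable (fun s => s * f s) volume a t :=
    (((continuousOn_id' _).mul hf).mono hIcc).intervalIntegrable_of_Icc ht.1.le
  simp_rw [sub_mul]
  rw [intervalIntegral.integral_sub (hint.const_mul t) hint', intervalIntegral.integral_const_mul]

theorem hasDerivAt_of_eq_integral_sub_mul {y : ℝ → ℝ} {α β : ℝ}
    (hf : ContinuousOn f (Ico a c))
    (hy : ∀ t ∈ Ico a c, y t = α + β * (t - a) + ∫ s in a..t, (t - s) * f s)
    (hx : x ∈ Ioo a c) : HasDerivAt y (β + ∫ s in a..x, f s) x := by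
  have hrhs := ((((hasDerivAt_id x).sub_const a).const_mul β).const_add α).add
    (hasDerivAt_integral_sub_mul hf hx)
  refine (hrhs.congr_of_eventuallyEq ?_).congr_deriv (by simp)
  filter_upwards [Ico_mem_nhds hx.1 hx.2] with t ht using hy t ht

end

section

variable {g y v : ℝ → ℝ} {a c : ℝ}

theorem energy_identity (hg : Continuous g) (hy : ContinuousOn y (Icc a c))
    (hv : ContinuousOn v (Icc a c)) (hy' : ∀ x ∈ Ioo a c, HasDerivAt y (v x) x)
    (hv' : ∀ x ∈ Ioo a c, HasDerivAt v (g (y x)) x) {x : ℝ} (hx : x ∈ Icc a c) :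
    v x ^ 2 = v a ^ 2 + 2 * ∫ r in y a..y x, g r := by
  set G : ℝ → ℝ := fun u => ∫ r in y a..u, g r
  have hG : ∀ u, HasDerivAt G (g u) u :=
    fun u => (hg.integral_hasStrictDerivAt (y a) u).hasDerivAt
  have hsub : Icc a x ⊆ Icc a c := Icc_subset_Icc_right hx.2
  have hconst := intervalIntegral.integral_eq_sub_of_hasDerivAt_of_le
    (f := fun t => v t ^ 2 - 2 * G (y t)) (f' := fun _ => 0) hx.1
    (((hv.mono hsub).pow 2).sub (continuousOn_const.mul
      ((intervalIntegral.continuous_primitive hg.intervalIntegrable _).comp_continuousOn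
        (hy.mono hsub))))
    (fun t ht => by
      have ht' : t ∈ Ioo a c := ⟨ht.1, ht.2.trans_le hx.2⟩
      exact (((hv' t ht').pow 2).sub (((hG (y t)).comp t (hy' t ht')).const_mul 2)).congr_deriv
        (by push_cast; ring))
    intervalIntegrable_const
  simp only [intervalIntegral.integral_zero, G, intervalIntegral.integral_same] at hconst
  linarith

theorem sub_eq_integral_inv_sqrt (hac : a ≤ c) (hg : Continuous g) (hy : ContinuousOn y (Icc a c))
    (hv : ContinuousOn v (Icc a c)) (hy' : ∀ x ∈ Ioo a c, HasDerivAt y (v x) x)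
    (hv' : ∀ x ∈ Ioo a c, HasDerivAt v (g (y x)) x) (hv_pos : ∀ x ∈ Icc a c, 0 < v x) :
    c - a = ∫ u in y a..y c, 1 / √(v a ^ 2 + 2 * ∫ r in y a..u, g r) := by
  set h : ℝ → ℝ := fun u => 1 / √(v a ^ 2 + 2 * ∫ r in y a..u, g r)
  have hvh : ∀ x ∈ Icc a c, √(v a ^ 2 + 2 * ∫ r in y a..y x, g r) = v x := fun x hx => by
    rw [← energy_identity hg hy hv hy' hv' hx, Real.sqrt_sq (hv_pos x hx).le]
  have hone : ∀ x ∈ uIcc a c, v x * h (y x) = 1 := fun x hx => by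
    rw [uIcc_of_le hac] at hx
    simp only [h, hvh x hx, one_div, mul_inv_cancel₀ (hv_pos x hx).ne']
  have hh : ContinuousOn h (y '' uIcc a c) := by
    rintro _ ⟨x, hx, rfl⟩
    rw [uIcc_of_le hac] at hx
    have hden : Continuous fun u => v a ^ 2 + 2 * ∫ r in y a..u, g r :=
      continuous_const.add (continuous_const.mul
        (intervalIntegral.continuous_primitive hg.intervalIntegrable _))
    refine (continuousAt_const.div hden.sqrt.continuousAt ?_).continuousWithinAt
    rw [hvh x hx]
    exact (hv_pos x hx).ne'
  calc c - a = ∫ x in a..c, v x * h (y x) := by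
        rw [intervalIntegral.integral_congr hone, intervalIntegral.integral_const, smul_eq_mul,
          mul_one]
    _ = ∫ u in y a..y c, h u := by
        rw [uIcc_of_le hac] at hh
        simpa using intervalIntegral.integral_deriv_smul_comp'' (g := h)
          (by rwa [uIcc_of_le hac])
          (fun x hx => (hy' x (by rwa [min_eq_left hac, max_eq_right hac] at hx)).hasDerivWithinAt)
          (by rwa [uIcc_of_le hac]) (by rwa [uIcc_of_le hac])

end

theorem blowup_time_lower_bound_general (b : ℝ → ℝ) (hb : LocallyLipschitz b)
    (hb_nonneg : ∀ x, 0 ≤ b x)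
    (t₀ α β T₁ : ℝ) (hβ : 0 < β)
    (y : ℝ → ℝ) (hy_cont : ContinuousOn y (Set.Ico t₀ (t₀ + T₁)))
    (hy_eq : ∀ t ∈ Set.Ico t₀ (t₀ + T₁),
      y t = α + β * (t - t₀) + ∫ s in t₀..t, (t - s) * b (y s)) :
    ENNReal.ofReal T₁ ≤ blowupTime b α β := by
  have hby : ContinuousOn (fun s => b (y s)) (Ico t₀ (t₀ + T₁)) :=
    hb.continuous.comp_continuousOn hy_cont
  refine le_of_forall_lt_imp_le_of_dense fun c hc => ?_
  have hc_top : c ≠ ⊤ := hc.ne_top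
  set t := t₀ + c.toReal
  have ht : t ∈ Ico t₀ (t₀ + T₁) := ⟨le_add_of_nonneg_right ENNReal.toReal_nonneg,
    by linarith [(ENNReal.lt_ofReal_iff_toReal_lt hc_top).1 hc]⟩
  have hIcc : Icc t₀ t ⊆ Ico t₀ (t₀ + T₁) := Icc_subset_Ico_right ht.2
  have hIoo : Ioo t₀ t ⊆ Ioo t₀ (t₀ + T₁) := Ioo_subset_Ioo_right ht.2.le
  have hyt₀ : y t₀ = α := by simpa using hy_eq t₀ (left_mem_Ico.2 (ht.1.trans_lt ht.2))
  have hv : ContinuousOn (fun x => β + ∫ s in t₀..x, b (y s)) (Icc t₀ t) := by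
    have := intervalIntegral.continuousOn_primitive_interval'
      ((hby.mono hIcc).intervalIntegrable_of_Icc (μ := volume) ht.1) left_mem_uIcc
    rw [uIcc_of_le ht.1] at this
    exact continuousOn_const.add this
  have htime := sub_eq_integral_inv_sqrt ht.1 hb.continuous (hy_cont.mono hIcc) hv
    (fun x hx => hasDerivAt_of_eq_integral_sub_mul hby hy_eq (hIoo hx))
    (fun x hx => (hasDerivAt_integral_of_continuousOn_Ico hby (hIoo hx)).const_add β)
    (fun x hx => add_pos_of_pos_of_nonneg hβ
      (intervalIntegral.integral_nonneg (μ := volume) hx.1 fun s _ => hb_nonneg _))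
  simp only [intervalIntegral.integral_same, add_zero, hyt₀] at htime
  calc c = ENNReal.ofReal (t - t₀) := by simp [t, hc_top]
    _ ≤ blowupTime b α β :=
      htime ▸ ofReal_intervalIntegral_le_lintegral_Ioi (fun u => by positivity) α (y t)

/-- If `y` solves the integral equation on `[t₀, t₀ + T₁)`, then `T₁ ≤ T(α,β)`. -/
theorem blowup_time_lower_bound (b : ℝ → ℝ) (hb : LocallyLipschitz b)
    (hb_nonneg : ∀ x, 0 ≤ b x) (hb_mono : Monotone b)
    (t₀ α β T₁ : ℝ) (hα : 0 < α) (hβ : 0 < β) (hT₁ : 0 < T₁)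
    (y : ℝ → ℝ) (hy_cont : ContinuousOn y (Set.Ico t₀ (t₀ + T₁)))
    (hy_eq : ∀ t ∈ Set.Ico t₀ (t₀ + T₁),
      y t = α + β * (t - t₀) + ∫ s in t₀..t, (t - s) * b (y s)) :
    ENNReal.ofReal T₁ ≤ blowupTime b α β :=
  blowup_time_lower_bound_general b hb hb_nonneg t₀ α β T₁ hβ y hy_cont hy_eq
end

section
/- Let b : ℝ → ℝ be locally Lipschitz, nonnegative and nondecreasing, let t₀ ∈ ℝ and α, β > 0, and set T(α,β) := ∫_α^∞ ds / (β² + 2∫_α^s b(r) dr)^{1/2} (with the convention 1/0 = ∞). Then for every T₁ with 0 < T₁ < T(α,β) there exists a continuous function y : [t₀, t₀ + T₁] → ℝ satisfying y(t) = α + β(t − t₀) + ∫_{t₀}^t (t − s) b(y(s)) ds for all t ∈ [t₀, t₀ + T₁]. -/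
open MeasureTheory Set

/-!
Conservation of energy for `y'' = b(y)` gives `y'² = β² + 2∫_α^y b`, so the solution should
solve the autonomous equation `y' = v(y)` with `v(x) = √(β² + 2∫_α^x b)`. Separating variables,
`y(t₀ + ·)` is the inverse of the time map `F(x) = ∫_α^x 1/v`, which is strictly increasing with
`F(x) → T(α,β)` as `x → ∞`; so this inverse is defined on `[0, T₁]` whenever `T₁ < T(α,β)`.
Since `v' = b/v`, the chain rule gives `(v ∘ y)' = b(y)`, i.e. `y'' = b(y)`, and Taylor's formula
with integral remainder turns this into the integral equation.
-/

open Filter Topology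

theorem exists_lt_setLIntegral_Ioc_of_lt_setLIntegral_Ioi {μ : Measure ℝ} {f : ℝ → ENNReal}
    {a : ℝ} {T : ENNReal} (hf : AEMeasurable f (μ.restrict (Ioi a)))
    (hT : T < ∫⁻ s in Ioi a, f s ∂μ) : ∃ x, a < x ∧ T < ∫⁻ s in Ioc a x, f s ∂μ := by
  have hlim : Tendsto (fun x => ∫⁻ s in Ioc a x, f s ∂μ) atTop (𝓝 (∫⁻ s in Ioi a, f s ∂μ)) := by
    have := AECover.lintegral_tendsto_of_countably_generated
      (aecover_Iic (μ := μ.restrict (Ioi a)) tendsto_id) hf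
    simpa only [Measure.restrict_restrict measurableSet_Iic, Iic_inter_Ioi, id] using this
  exact ((eventually_gt_atTop a).and (hlim.eventually_const_lt hT)).exists

theorem eq_add_mul_add_integral_sub_mul_of_hasDerivAt {y y' y'' : ℝ → ℝ} {a t : ℝ}
    (hy : ∀ s ∈ uIcc a t, HasDerivAt y (y' s) s) (hy' : ∀ s ∈ uIcc a t, HasDerivAt y' (y'' s) s)
    (hy'' : IntervalIntegrable y'' volume a t) :
    y t = y a + y' a * (t - a) + ∫ s in a..t, (t - s) * y'' s := by
  have hy'_int : IntervalIntegrable y' volume a t :=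
    (HasDerivAt.continuousOn hy').intervalIntegrable
  have hparts := intervalIntegral.integral_mul_deriv_eq_deriv_mul
    (fun s _ => (hasDerivAt_id s).const_sub t) hy' intervalIntegrable_const hy''
  have hftc := intervalIntegral.integral_eq_sub_of_hasDerivAt hy hy'_int
  simp only [id, neg_one_mul, intervalIntegral.integral_neg] at hparts
  rw [hparts, hftc]
  ring

theorem exists_hasDerivAt_inverse_of_deriv_pos {F F' : ℝ → ℝ} {a b : ℝ} (hab : a ≤ b)
    (hF : ∀ x ∈ Icc a b, HasDerivAt F (F' x) x) (hF' : ∀ x ∈ Icc a b, 0 < F' x) :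
    ∃ G : ℝ → ℝ, ∀ v ∈ Ioo (F a) (F b),
      G v ∈ Ioo a b ∧ F (G v) = v ∧ HasDerivAt G (F' (G v))⁻¹ v := by
  have hcont : ContinuousOn F (Icc a b) := HasDerivAt.continuousOn hF
  have hmono : StrictMonoOn F (Icc a b) :=
    strictMonoOn_of_hasDerivWithinAt_pos (convex_Icc a b) hcont
      (fun x hx => (hF x (interior_subset hx)).hasDerivWithinAt)
      (fun x hx => hF' x (interior_subset hx))
  set G := Function.invFunOn F (Icc a b)
  have hsurj : Icc (F a) (F b) ⊆ F '' Icc a b := intermediate_value_Icc hab hcont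
  have hGmem : ∀ v ∈ Icc (F a) (F b), G v ∈ Icc a b := fun v hv =>
    Function.invFunOn_mem (hsurj hv)
  have hFG : ∀ v ∈ Icc (F a) (F b), F (G v) = v := fun v hv =>
    Function.invFunOn_eq (hsurj hv)
  have hGF : ∀ x ∈ Icc a b, G (F x) = x := fun x hx =>
    hmono.injOn (Function.invFunOn_mem ⟨x, hx, rfl⟩) hx (Function.invFunOn_eq ⟨x, hx, rfl⟩)
  have hGmono : StrictMonoOn G (Icc (F a) (F b)) := fun u hu v hv huv => by
    by_contra! h
    have := hmono.monotoneOn (hGmem v hv) (hGmem u hu) h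
    rw [hFG u hu, hFG v hv] at this
    exact not_lt_of_ge this huv
  have hGimage : G '' Icc (F a) (F b) = Icc a b := by
    refine (mapsTo_iff_image_subset.mp fun v hv => hGmem v hv).antisymm fun x hx => ?_
    exact ⟨F x, ⟨hmono.monotoneOn ⟨le_rfl, hab⟩ hx hx.1, hmono.monotoneOn hx ⟨hab, le_rfl⟩ hx.2⟩,
      hGF x hx⟩
  refine ⟨G, fun v hv => ?_⟩
  have hvIcc : v ∈ Icc (F a) (F b) := Ioo_subset_Icc_self hv
  have hGv : G v ∈ Ioo a b := by
    refine ⟨(hGmem v hvIcc).1.lt_of_ne ?_, (hGmem v hvIcc).2.lt_of_ne ?_⟩ <;> rintro h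
    · exact hv.1.ne (by rw [h, hFG v hvIcc])
    · exact hv.2.ne (by rw [← h, hFG v hvIcc])
  have hGcont : ContinuousAt G v :=
    hGmono.continuousAt_of_image_mem_nhds (Icc_mem_nhds hv.1 hv.2)
      (hGimage ▸ Icc_mem_nhds hGv.1 hGv.2)
  refine ⟨hGv, hFG v hvIcc, HasDerivAt.of_local_left_inverse hGcont
    (hF _ (Ioo_subset_Icc_self hGv)) (hF' _ (Ioo_subset_Icc_self hGv)).ne' ?_⟩
  filter_upwards [Icc_mem_nhds hv.1 hv.2] with w hw using hFG w hw

noncomputable def phaseVelocity (b : ℝ → ℝ) (α β x : ℝ) : ℝ :=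
  √(β ^ 2 + 2 * ∫ r in α..x, b r)

noncomputable def timeMap (b : ℝ → ℝ) (α β x : ℝ) : ℝ :=
  ∫ s in α..x, (phaseVelocity b α β s)⁻¹

section PhaseVelocity

variable {b : ℝ → ℝ} {α β x : ℝ}

theorem phaseVelocity_self (hβ : 0 ≤ β) : phaseVelocity b α β α = β := by
  simp [phaseVelocity, Real.sqrt_sq hβ]

theorem continuous_phaseVelocity (hb : Continuous b) : Continuous (phaseVelocity b α β) :=
  (continuous_const.add (continuous_const.mul
    (intervalIntegral.continuous_primitive (fun _ _ => hb.intervalIntegrable _ _) α))).sqrt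

theorem hasDerivAt_phaseVelocity (hb : Continuous b) (hx : 0 < β ^ 2 + 2 * ∫ r in α..x, b r) :
    HasDerivAt (phaseVelocity b α β) (b x / phaseVelocity b α β x) x := by
  have := (((hb.integral_hasStrictDerivAt α x).hasDerivAt.const_mul 2).const_add (β ^ 2)).sqrt
    hx.ne'
  rwa [mul_div_mul_left _ _ two_ne_zero] at this

theorem exists_lt_forall_le_sq_add_two_mul_integral_pos (hb : Continuous b)
    (hb_nonneg : ∀ x, 0 ≤ b x) (hβ : β ≠ 0) :
    ∃ c < α, ∀ x, c ≤ x → 0 < β ^ 2 + 2 * ∫ r in α..x, b r := by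
  have hE : Continuous fun x => β ^ 2 + 2 * ∫ r in α..x, b r :=
    continuous_const.add (continuous_const.mul
      (intervalIntegral.continuous_primitive (fun _ _ => hb.intervalIntegrable _ _) α))
  have hEα : 0 < β ^ 2 + 2 * ∫ r in α..α, b r := by
    simp only [intervalIntegral.integral_same, mul_zero, add_zero]
    positivity
  obtain ⟨l, hlα, hl⟩ := exists_Ioc_subset_of_mem_nhds
    (hE.continuousAt.eventually (lt_mem_nhds hEα)) ⟨α - 1, by linarith⟩
  refine ⟨(l + α) / 2, by linarith, fun x hx => ?_⟩
  rcases le_total x α with hxα | hαx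
  · exact hl ⟨by linarith, hxα⟩
  · have : 0 ≤ ∫ r in α..x, b r := intervalIntegral.integral_nonneg hαx fun r _ => hb_nonneg r
    positivity

theorem hasDerivAt_timeMap (hb : Continuous b)
    (hpos : ∀ s ∈ uIcc α x, 0 < β ^ 2 + 2 * ∫ r in α..s, b r) :
    HasDerivAt (timeMap b α β) (phaseVelocity b α β x)⁻¹ x := by
  have hv := continuous_phaseVelocity (α := α) (β := β) hb
  have hinv : ContinuousOn (fun s => (phaseVelocity b α β s)⁻¹) (uIcc α x) :=
    hv.continuousOn.inv₀ fun s hs => (Real.sqrt_pos.2 (hpos s hs)).ne'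
  exact intervalIntegral.integral_hasDerivAt_right hinv.intervalIntegrable
    hv.measurable.inv.stronglyMeasurable.stronglyMeasurableAtFilter
    (hv.continuousAt.inv₀ (Real.sqrt_pos.2 (hpos x right_mem_uIcc)).ne')

theorem exists_lt_timeMap_of_lt_blowupTime {T : ℝ} (hb : Continuous b)
    (hb_nonneg : ∀ x, 0 ≤ b x) (hβ : β ≠ 0) (hT : ENNReal.ofReal T < blowupTime b α β) :
    ∃ x, α < x ∧ T < timeMap b α β x := by
  have hv := continuous_phaseVelocity (α := α) (β := β) hb
  have hblow : blowupTime b α β = ∫⁻ s in Ioi α, ENNReal.ofReal (phaseVelocity b α β s)⁻¹ := by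
    simp only [blowupTime, phaseVelocity, one_div]
  obtain ⟨x, hαx, hx⟩ := exists_lt_setLIntegral_Ioc_of_lt_setLIntegral_Ioi
    (f := fun s => ENNReal.ofReal (phaseVelocity b α β s)⁻¹)
    hv.measurable.inv.ennreal_ofReal.aemeasurable (hblow ▸ hT)
  obtain ⟨c, hcα, hpos⟩ := exists_lt_forall_le_sq_add_two_mul_integral_pos (α := α) hb hb_nonneg hβ
  have hint : IntegrableOn (fun s => (phaseVelocity b α β s)⁻¹) (Ioc α x) := by
    refine (ContinuousOn.integrableOn_Icc ?_).mono_set Ioc_subset_Icc_self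
    exact hv.continuousOn.inv₀ fun s hs => (Real.sqrt_pos.2 (hpos s (hcα.le.trans hs.1))).ne'
  rw [← ofReal_integral_eq_lintegral_ofReal hint
    (ae_of_all _ fun s => inv_nonneg.2 (Real.sqrt_nonneg _)),
    ← intervalIntegral.integral_of_le hαx.le] at hx
  exact ⟨x, hαx, (ENNReal.ofReal_lt_ofReal_iff'.1 hx).1⟩

theorem exists_hasDerivAt_eq_phaseVelocity {x₁ : ℝ} (hb : Continuous b)
    (hb_nonneg : ∀ x, 0 ≤ b x) (hβ : β ≠ 0) (hx₁ : α < x₁) :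
    ∃ y : ℝ → ℝ, y 0 = α ∧ ∃ a < 0, ∀ t ∈ Ioo a (timeMap b α β x₁),
      HasDerivAt y (phaseVelocity b α β (y t)) t ∧
        HasDerivAt (fun s => phaseVelocity b α β (y s)) (b (y t)) t := by
  -- Inverting the time map on `[c, x₁]` with `c < α` makes the solution differentiable at `0`.
  obtain ⟨c, hcα, hpos⟩ := exists_lt_forall_le_sq_add_two_mul_integral_pos (α := α) hb hb_nonneg hβ
  have hvpos : ∀ x, c ≤ x → 0 < phaseVelocity b α β x := fun x hx => Real.sqrt_pos.2 (hpos x hx)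
  have hF : ∀ x, c ≤ x → HasDerivAt (timeMap b α β) (phaseVelocity b α β x)⁻¹ x := fun x hx =>
    hasDerivAt_timeMap hb fun s hs => hpos s ((le_min hcα.le hx).trans hs.1)
  have hFmono : StrictMonoOn (timeMap b α β) (Ici c) :=
    strictMonoOn_of_hasDerivWithinAt_pos (convex_Ici c)
      (fun x hx => (hF x hx).continuousAt.continuousWithinAt)
      (fun x hx => (hF x (interior_subset hx)).hasDerivWithinAt)
      (fun x hx => inv_pos.2 (hvpos x (interior_subset hx)))
  have hFα : timeMap b α β α = 0 := intervalIntegral.integral_same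
  have hFc : timeMap b α β c < 0 := hFα ▸ hFmono self_mem_Ici hcα.le hcα
  have hFx₁ : 0 < timeMap b α β x₁ := hFα ▸ hFmono hcα.le (hcα.le.trans hx₁.le) hx₁
  obtain ⟨y, hy⟩ := exists_hasDerivAt_inverse_of_deriv_pos (hcα.trans hx₁).le
    (fun x hx => hF x hx.1) (fun x hx => inv_pos.2 (hvpos x hx.1))
  refine ⟨y, ?_, _, hFc, fun t ht => ?_⟩
  · obtain ⟨hy₀, hFy₀, -⟩ := hy 0 ⟨hFc, hFx₁⟩
    exact hFmono.injOn hy₀.1.le hcα.le (hFy₀.trans hFα.symm)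
  · obtain ⟨hyt, -, hderiv⟩ := hy t ⟨ht.1, ht.2⟩
    rw [inv_inv] at hderiv
    refine ⟨hderiv, ?_⟩
    have := (hasDerivAt_phaseVelocity hb (hpos _ hyt.1.le)).comp t hderiv
    rwa [div_mul_cancel₀ _ (hvpos _ hyt.1.le).ne'] at this

end PhaseVelocity

theorem exists_solution_of_lt_blowupTime_general (b : ℝ → ℝ) (hb : LocallyLipschitz b)
    (hb_nonneg : ∀ x, 0 ≤ b x)
    (t₀ α β T₁ : ℝ) (hβ : 0 < β)
    (hT₁_lt : ENNReal.ofReal T₁ < blowupTime b α β) :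
    ∃ y : ℝ → ℝ, ContinuousOn y (Set.Icc t₀ (t₀ + T₁)) ∧
      ∀ t ∈ Set.Icc t₀ (t₀ + T₁),
        y t = α + β * (t - t₀) + ∫ s in t₀..t, (t - s) * b (y s) := by
  have hbc : Continuous b := hb.continuous
  obtain ⟨x₁, hαx₁, hT₁x₁⟩ := exists_lt_timeMap_of_lt_blowupTime hbc hb_nonneg hβ.ne' hT₁_lt
  obtain ⟨y, hy₀, a, ha, hy⟩ := exists_hasDerivAt_eq_phaseVelocity hbc hb_nonneg hβ.ne' hαx₁
  have hy_shift : ∀ t ∈ Icc t₀ (t₀ + T₁),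
      HasDerivAt (fun s => y (s - t₀)) (phaseVelocity b α β (y (t - t₀))) t ∧
        HasDerivAt (fun s => phaseVelocity b α β (y (s - t₀))) (b (y (t - t₀))) t := by
    intro t ht
    have hyt := hy (t - t₀) ⟨by linarith [ht.1], by linarith [ht.2]⟩
    exact ⟨hyt.1.comp_sub_const t t₀, hyt.2.comp_sub_const t t₀⟩
  refine ⟨fun t => y (t - t₀), fun t ht => (hy_shift t ht).1.continuousAt.continuousWithinAt,
    fun t ht => ?_⟩
  have hsub : uIcc t₀ t ⊆ Icc t₀ (t₀ + T₁) := by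
    rw [uIcc_of_le ht.1]; exact Icc_subset_Icc_right ht.2
  have hb_y : ContinuousOn (fun s => b (y (s - t₀))) (uIcc t₀ t) := fun s hs =>
    (hbc.continuousAt.comp (hy_shift s (hsub hs)).1.continuousAt).continuousWithinAt
  have := eq_add_mul_add_integral_sub_mul_of_hasDerivAt (fun s hs => (hy_shift s (hsub hs)).1)
    (fun s hs => (hy_shift s (hsub hs)).2) hb_y.intervalIntegrable
  simpa only [sub_self, hy₀, phaseVelocity_self hβ.le, mul_comm β] using this

/-- For every `T₁ < T(α,β)` the integral equation has a continuous solution on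
`[t₀, t₀ + T₁]`. -/
theorem exists_solution_of_lt_blowupTime (b : ℝ → ℝ) (hb : LocallyLipschitz b)
    (hb_nonneg : ∀ x, 0 ≤ b x) (hb_mono : Monotone b)
    (t₀ α β T₁ : ℝ) (hα : 0 < α) (hβ : 0 < β) (hT₁ : 0 < T₁)
    (hT₁_lt : ENNReal.ofReal T₁ < blowupTime b α β) :
    ∃ y : ℝ → ℝ, ContinuousOn y (Set.Icc t₀ (t₀ + T₁)) ∧
      ∀ t ∈ Set.Icc t₀ (t₀ + T₁),
        y t = α + β * (t - t₀) + ∫ s in t₀..t, (t - s) * b (y s) :=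
  exists_solution_of_lt_blowupTime_general b hb hb_nonneg t₀ α β T₁ hβ hT₁_lt
end

section
/- Let b : ℝ → ℝ be locally Lipschitz, nonnegative and nondecreasing, and for α, β > 0 set T(α,β) := ∫_α^∞ ds / (β² + 2∫_α^s b(r) dr)^{1/2} (with the convention 1/0 = ∞). If T(α₀, β₀) < ∞ for some α₀ > 0 and β₀ > 0, then T(α, β) < ∞ for all α > 0 and β > 0. -/
open MeasureTheory Set

/-!
If `T(α₀, β₀) < ∞` then `∫_{α₀}^s b → ∞`, since otherwise the integrand would be bounded below
by a positive constant on a half-line. As `∫_α^s b` differs from `∫_{α₀}^s b` by a constant,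
`β² + 2∫_α^s b` eventually exceeds half of `β₀² + 2∫_{α₀}^s b`, so the integrand of `T(α, β)` is
eventually at most `√2` times that of `T(α₀, β₀)`; before that it is bounded by `1/β` on a
bounded interval.
-/

open Filter
open scoped ENNReal

theorem one_div_sqrt_le_sqrt_two_mul_one_div_sqrt {x y : ℝ} (hy : 0 < y) (hyx : y ≤ 2 * x) :
    1 / √x ≤ √2 * (1 / √y) := by
  have hx : 0 < x := by linarith
  rw [mul_one_div, div_le_div_iff₀ (Real.sqrt_pos.2 hx) (Real.sqrt_pos.2 hy), one_mul,
    ← Real.sqrt_mul zero_le_two]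
  exact Real.sqrt_le_sqrt hyx

theorem one_div_sqrt_sq_add_le {β x : ℝ} (hβ : 0 < β) (hx : 0 ≤ x) :
    1 / √(β ^ 2 + x) ≤ 1 / β := by
  refine one_div_le_one_div_of_le hβ ?_
  calc β = √(β ^ 2) := (Real.sqrt_sq hβ.le).symm
    _ ≤ √(β ^ 2 + x) := Real.sqrt_le_sqrt (by linarith)

theorem setLIntegral_Ioi_eq_top_of_le {f : ℝ → ℝ≥0∞} {a : ℝ} {c : ℝ≥0∞} (hc : c ≠ 0)
    (hcf : ∀ s ∈ Ioi a, c ≤ f s) : ∫⁻ s in Ioi a, f s = ⊤ :=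
  top_unique <| calc
    ⊤ = ∫⁻ _ in Ioi a, c := by rw [setLIntegral_const, Real.volume_Ioi, ENNReal.mul_top hc]
    _ ≤ ∫⁻ s in Ioi a, f s := setLIntegral_mono' measurableSet_Ioi hcf

theorem setLIntegral_Ioi_lt_top_of_le_of_eventually_le_mul {f g : ℝ → ℝ≥0∞} {a a₀ : ℝ}
    {C c : ℝ≥0∞} (hC : C ≠ ⊤) (hc : c ≠ ⊤) (hfC : ∀ s ∈ Ioi a, f s ≤ C)
    (hfg : ∀ᶠ s in atTop, f s ≤ c * g s) (hg : ∫⁻ s in Ioi a₀, g s < ⊤) :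
    ∫⁻ s in Ioi a, f s < ⊤ := by
  obtain ⟨M₁, hM₁⟩ := eventually_atTop.1 hfg
  set M := max M₁ (max a a₀)
  have hbounded : ∫⁻ s in Ioc a M, f s < ⊤ :=
    calc ∫⁻ s in Ioc a M, f s ≤ ∫⁻ _ in Ioc a M, C :=
          setLIntegral_mono' measurableSet_Ioc fun s hs => hfC s hs.1
      _ = C * volume (Ioc a M) := setLIntegral_const _ _
      _ < ⊤ := ENNReal.mul_lt_top hC.lt_top measure_Ioc_lt_top
  have htail : ∫⁻ s in Ioi M, f s < ⊤ :=
    calc ∫⁻ s in Ioi M, f s ≤ ∫⁻ s in Ioi M, c * g s :=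
          setLIntegral_mono' measurableSet_Ioi fun s hs => hM₁ s (le_of_max_le_left hs.le)
      _ = c * ∫⁻ s in Ioi M, g s := lintegral_const_mul' c _ hc
      _ ≤ c * ∫⁻ s in Ioi a₀, g s := by
          gcongr
          exact le_max_of_le_right (le_max_right a a₀)
      _ < ⊤ := ENNReal.mul_lt_top hc.lt_top hg
  calc ∫⁻ s in Ioi a, f s = ∫⁻ s in Ioc a M ∪ Ioi M, f s := by
        rw [Ioc_union_Ioi_eq_Ioi (le_max_of_le_right (le_max_left a a₀))]
    _ ≤ (∫⁻ s in Ioc a M, f s) + ∫⁻ s in Ioi M, f s := lintegral_union_le _ _ _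
    _ < ⊤ := ENNReal.add_lt_top.2 ⟨hbounded, htail⟩

section

variable {b : ℝ → ℝ}

theorem monotone_intervalIntegral_of_nonneg (hbi : ∀ a c, IntervalIntegrable b volume a c)
    (hb : ∀ x, 0 ≤ b x) (a : ℝ) :
    Monotone fun s => ∫ r in a..s, b r := fun s t hst => by
  have hstep : 0 ≤ ∫ r in s..t, b r := intervalIntegral.integral_nonneg hst fun x _ => hb x
  rw [← intervalIntegral.integral_interval_sub_left (hbi a t) (hbi a s)] at hstep
  simpa using hstep

theorem tendsto_intervalIntegral_atTop_of_blowupTime_lt_top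
    (hbi : ∀ a c, IntervalIntegrable b volume a c) (hb : ∀ x, 0 ≤ b x) {α β : ℝ} (hβ : 0 < β)
    (hT : blowupTime b α β < ⊤) :
    Tendsto (fun s => ∫ r in α..s, b r) atTop atTop := by
  have hmono := monotone_intervalIntegral_of_nonneg hbi hb α
  refine tendsto_atTop_atTop_of_monotone' hmono fun ⟨K, hK⟩ => hT.ne ?_
  have hprim_nonneg : ∀ s ∈ Ioi α, 0 ≤ ∫ r in α..s, b r := fun s hs => by
    simpa using hmono hs.le
  have hK_nonneg : 0 ≤ K := by simpa using hK ⟨α, rfl⟩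
  refine setLIntegral_Ioi_eq_top_of_le (c := ENNReal.ofReal (1 / √(β ^ 2 + 2 * K))) ?_ ?_
  · simp only [ne_eq, ENNReal.ofReal_eq_zero, not_le]
    positivity
  · intro s hs
    have := hprim_nonneg s hs
    refine ENNReal.ofReal_le_ofReal (one_div_le_one_div_of_le (by positivity) ?_)
    exact Real.sqrt_le_sqrt (by linarith [hK ⟨s, rfl⟩])

theorem eventually_ofReal_one_div_sqrt_le_sqrt_two_mul
    (hbi : ∀ a c, IntervalIntegrable b volume a c) {α₀ : ℝ}
    (htend : Tendsto (fun s => ∫ r in α₀..s, b r) atTop atTop) (α β β₀ : ℝ) :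
    ∀ᶠ s in atTop, ENNReal.ofReal (1 / √(β ^ 2 + 2 * ∫ r in α..s, b r)) ≤
      ENNReal.ofReal √2 * ENNReal.ofReal (1 / √(β₀ ^ 2 + 2 * ∫ r in α₀..s, b r)) := by
  filter_upwards [htend.eventually_ge_atTop (β₀ ^ 2 / 2 - 2 * ∫ r in α..α₀, b r),
    htend.eventually_gt_atTop 0] with s hlarge hpos
  rw [← ENNReal.ofReal_mul (Real.sqrt_nonneg 2)]
  refine ENNReal.ofReal_le_ofReal (one_div_sqrt_le_sqrt_two_mul_one_div_sqrt (by positivity) ?_)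
  rw [← intervalIntegral.integral_add_adjacent_intervals (hbi α α₀) (hbi α₀ s)]
  nlinarith [sq_nonneg β]

end

theorem blowupTime_finite_of_finite_general (b : ℝ → ℝ) (hb : LocallyLipschitz b)
    (hb_nonneg : ∀ x, 0 ≤ b x)
    (α₀ β₀ : ℝ) (hβ₀ : 0 < β₀)
    (hfin : blowupTime b α₀ β₀ < ⊤) :
    ∀ α β : ℝ, 0 < α → 0 < β → blowupTime b α β < ⊤ := by
  intro α β _ hβ
  have hbi : ∀ a c, IntervalIntegrable b volume a c := hb.continuous.intervalIntegrable
  have htend := tendsto_intervalIntegral_atTop_of_blowupTime_lt_top hbi hb_nonneg hβ₀ hfin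
  refine setLIntegral_Ioi_lt_top_of_le_of_eventually_le_mul (C := ENNReal.ofReal (1 / β))
    ENNReal.ofReal_ne_top ENNReal.ofReal_ne_top (fun s hs => ?_)
    (eventually_ofReal_one_div_sqrt_le_sqrt_two_mul hbi htend α β β₀) hfin
  have hprim_nonneg : 0 ≤ ∫ r in α..s, b r :=
    intervalIntegral.integral_nonneg hs.le fun x _ => hb_nonneg x
  exact ENNReal.ofReal_le_ofReal (one_div_sqrt_sq_add_le hβ (by positivity))

/-- If `T(α₀,β₀) < ∞` for some `α₀, β₀ > 0`, then `T(α,β) < ∞` for all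
`α, β > 0`. -/
theorem blowupTime_finite_of_finite (b : ℝ → ℝ) (hb : LocallyLipschitz b)
    (hb_nonneg : ∀ x, 0 ≤ b x) (hb_mono : Monotone b)
    (α₀ β₀ : ℝ) (hα₀ : 0 < α₀) (hβ₀ : 0 < β₀)
    (hfin : blowupTime b α₀ β₀ < ⊤) :
    ∀ α β : ℝ, 0 < α → 0 < β → blowupTime b α β < ⊤ :=
  blowupTime_finite_of_finite_general b hb hb_nonneg α₀ β₀ hβ₀ hfin
end

section
/- Let b : ℝ → ℝ be locally Lipschitz, nonnegative and nondecreasing, let t₀ ∈ ℝ, T > t₀, and let α > α̃ > 0 and β > β̃ > 0. Suppose y : [t₀, T) → ℝ is continuous and satisfies y(t) = α + β(t − t₀) + ∫_{t₀}^t (t − s) b(y(s)) ds for all t ∈ [t₀, T), and ỹ : [t₀, T) → ℝ is continuous and satisfies ỹ(t) ≤ α̃ + β̃(t − t₀) + ∫_{t₀}^t (t − s) b(ỹ(s)) ds for all t ∈ [t₀, T). Then y(t) ≥ ỹ(t) for all t ∈ [t₀, T). -/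
open MeasureTheory Set

/-- Comparison principle: a solution of the integral equation with larger data
dominates any continuous subsolution with smaller data, up to the (common)
blow-up time `T`. -/
theorem comparison_subsolution (b : ℝ → ℝ) (hb : LocallyLipschitz b)
    (hb_nonneg : ∀ x, 0 ≤ b x) (hb_mono : Monotone b)
    (t₀ T α β α' β' : ℝ) (hT : t₀ < T)
    (hα' : 0 < α') (hαα : α' < α) (hβ' : 0 < β') (hββ : β' < β)
    (y ytil : ℝ → ℝ)
    (hy_cont : ContinuousOn y (Set.Ico t₀ T))
    (hytil_cont : ContinuousOn ytil (Set.Ico t₀ T))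
    (hy_eq : ∀ t ∈ Set.Ico t₀ T,
      y t = α + β * (t - t₀) + ∫ s in t₀..t, (t - s) * b (y s))
    (hytil_le : ∀ t ∈ Set.Ico t₀ T,
      ytil t ≤ α' + β' * (t - t₀) + ∫ s in t₀..t, (t - s) * b (ytil s)) :
    ∀ t ∈ Set.Ico t₀ T, ytil t ≤ y t := by
  by_contra hcon
  push_neg at hcon
  obtain ⟨t₂, ht₂mem, ht₂⟩ := hcon
  set S : Set ℝ := {t | t ∈ Set.Ico t₀ T ∧ y t < ytil t} with hSdef
  have hSne : S.Nonempty := ⟨t₂, ht₂mem, ht₂⟩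
  have hSbdd : BddBelow S := ⟨t₀, fun t ht => ht.1.1⟩
  set t₁ := sInf S with ht₁def
  have ht₁mem : t₁ ∈ Set.Ico t₀ T := by
    refine ⟨le_csInf hSne fun t ht => ht.1.1, ?_⟩
    exact lt_of_le_of_lt (csInf_le hSbdd ⟨ht₂mem, ht₂⟩) ht₂mem.2
  have hclosure : t₁ ∈ closure S := csInf_mem_closure hSne hSbdd
  -- below t₁ we have ytil ≤ y
  have hA : ∀ s ∈ Set.Ico t₀ t₁, ytil s ≤ y s := by
    intro s hs
    by_contra h
    push_neg at h
    have hsS : s ∈ S := ⟨⟨hs.1, lt_of_lt_of_le hs.2 (le_of_lt ht₁mem.2)⟩, h⟩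
    exact absurd (csInf_le hSbdd hsS) (not_le.mpr hs.2)
  -- at t₁, by continuity, y t₁ ≤ ytil t₁
  have hB : y t₁ ≤ ytil t₁ := by
    have hne : (nhdsWithin t₁ S).NeBot := mem_closure_iff_nhdsWithin_neBot.mp hclosure
    have hc : ContinuousWithinAt (fun t => y t - ytil t) S t₁ :=
      ((hy_cont.sub hytil_cont).continuousWithinAt ht₁mem).mono (fun t ht => ht.1)
    have hle : y t₁ - ytil t₁ ≤ 0 := by
      refine le_of_tendsto hc.tendsto ?_
      exact eventually_nhdsWithin_of_forall (fun t ht => sub_nonpos.mpr (le_of_lt ht.2))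
    linarith
  -- integrability and integral comparison on [t₀, t₁]
  have hbc : Continuous b := hb.continuous
  have hIcc : Set.Icc t₀ t₁ ⊆ Set.Ico t₀ T :=
    fun s hs => ⟨hs.1, lt_of_le_of_lt hs.2 ht₁mem.2⟩
  have hint1 : IntervalIntegrable (fun s => (t₁ - s) * b (ytil s)) volume t₀ t₁ := by
    apply ContinuousOn.intervalIntegrable
    rw [Set.uIcc_of_le ht₁mem.1]
    exact (continuousOn_const.sub continuousOn_id).mul
      (hbc.comp_continuousOn (hytil_cont.mono hIcc))
  have hint2 : IntervalIntegrable (fun s => (t₁ - s) * b (y s)) volume t₀ t₁ := by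
    apply ContinuousOn.intervalIntegrable
    rw [Set.uIcc_of_le ht₁mem.1]
    exact (continuousOn_const.sub continuousOn_id).mul
      (hbc.comp_continuousOn (hy_cont.mono hIcc))
  have hmono : ∀ s ∈ Set.Icc t₀ t₁, (t₁ - s) * b (ytil s) ≤ (t₁ - s) * b (y s) := by
    intro s hs
    rcases eq_or_lt_of_le hs.2 with h | h
    · simp [h, sub_self]
    · exact mul_le_mul_of_nonneg_left (hb_mono (hA s ⟨hs.1, h⟩)) (by linarith)
  have hintle :
      (∫ s in t₀..t₁, (t₁ - s) * b (ytil s)) ≤ ∫ s in t₀..t₁, (t₁ - s) * b (y s) :=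
    intervalIntegral.integral_mono_on ht₁mem.1 hint1 hint2 hmono
  have h1 := hytil_le t₁ ht₁mem
  have h2 := hy_eq t₁ ht₁mem
  have hβ : β' * (t₁ - t₀) ≤ β * (t₁ - t₀) :=
    mul_le_mul_of_nonneg_right (le_of_lt hββ) (by linarith [ht₁mem.1])
  linarith
end

section
/- Let b : ℝ → ℝ be locally Lipschitz, nonnegative and nondecreasing, let A, B ≥ 0, let g : [0, ∞) → ℝ be continuous, and let 0 < T < ∞. Suppose X : [0, T) → ℝ is continuous, satisfies X(t) = A + B·t + ∫_0^t (t − s) b(X(s)) ds + g(t) for all t ∈ [0, T), and blows up at time T in the sense that limsup_{t → T⁻} X(t) = +∞. Then T(α, β) := ∫_α^∞ ds / (β² + 2∫_α^s b(r) dr)^{1/2} is finite for all α > 0 and β > 0. -/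
/-!
Bound `g ≤ C` on `[0, T]` and put `a = A + C`. On `[0, t]`, `t < T`, the solution `X` is dominated
by the solution `φ` of `φ'' = b ∘ X ≤ b ∘ φ`, `φ(0) = a`, `φ'(0) = B`. As `φ' ≥ 0`, the energy
`φ'² - 2 ∫_a^φ b` is nonincreasing, so `φ' ≤ (β² + 2 ∫_a^φ b)^{1/2}` for `β = B + 1`, and the
substitution `u = φ(t)` gives `∫_a^{φ(t)} du / (β² + 2 ∫_a^u b)^{1/2} ≤ t < T`. Since `X`, hence
`φ`, is unbounded near `T`, this makes `T(a, β) ≤ T`. Finiteness of one `T(a, β)` forces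
`∫_a^s b → ∞`, so for large `s` the integrands of any two `T(α, β)` are within a factor `2`, and
finiteness passes to every `α` and every `β > 0`.
-/

open MeasureTheory Set Filter

open intervalIntegral Real

noncomputable def blowupIntegrand (b : ℝ → ℝ) (α β s : ℝ) : ℝ :=
  1 / √(β ^ 2 + 2 * ∫ r in α..s, b r)

lemma blowupTime_eq_lintegral (b : ℝ → ℝ) (α β : ℝ) :
    blowupTime b α β = ∫⁻ s in Ioi α, ENNReal.ofReal (blowupIntegrand b α β s) := rfl

lemma one_div_sqrt_mul_le_one {x y : ℝ} (hy : 0 ≤ y) (h : y ^ 2 ≤ x) : 1 / √x * y ≤ 1 := by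
  rw [one_div_mul_eq_div]
  exact div_le_one_of_le₀ ((le_sqrt hy ((sq_nonneg y).trans h)).2 h) (sqrt_nonneg x)

lemma one_div_sqrt_le_two_mul {x y : ℝ} (hx : 0 < x) (h : x ≤ 4 * y) :
    1 / √y ≤ 2 * (1 / √x) := by
  have hy : 0 < y := by linarith
  rw [mul_one_div, div_le_div_iff₀ (sqrt_pos.2 hy) (sqrt_pos.2 hx), one_mul]
  calc √x ≤ √(2 ^ 2 * y) := sqrt_le_sqrt (by linarith)
    _ = 2 * √y := by rw [sqrt_mul (by positivity), sqrt_sq zero_le_two]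

section BlowupIntegrand

variable {b : ℝ → ℝ}

lemma monotone_primitive (hb : Continuous b) (hb0 : ∀ x, 0 ≤ b x) (a : ℝ) :
    Monotone fun s => ∫ r in a..s, b r := fun s t hst => by
  rw [← sub_nonneg, integral_interval_sub_left (hb.intervalIntegrable _ _)
    (hb.intervalIntegrable _ _)]
  exact integral_nonneg hst fun r _ => hb0 r

lemma blowupIntegrand_nonneg (b : ℝ → ℝ) (α β s : ℝ) : 0 ≤ blowupIntegrand b α β s := by
  unfold blowupIntegrand; positivity

lemma blowupIntegrand_le (hb0 : ∀ x, 0 ≤ b x) {α β s : ℝ} (hβ : 0 < β)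
    (hs : α ≤ s) : blowupIntegrand b α β s ≤ 1 / β := by
  have hI : 0 ≤ ∫ r in α..s, b r := integral_nonneg hs fun r _ => hb0 r
  refine one_div_le_one_div_of_le hβ ?_
  calc β = √(β ^ 2) := (sqrt_sq hβ.le).symm
    _ ≤ _ := sqrt_le_sqrt (by linarith)

lemma continuousOn_blowupIntegrand (hb : Continuous b) (hb0 : ∀ x, 0 ≤ b x) {β : ℝ}
    (hβ : β ≠ 0) (α : ℝ) : ContinuousOn (blowupIntegrand b α β) (Ici α) := by
  have hden : Continuous fun s => √(β ^ 2 + 2 * ∫ r in α..s, b r) :=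
    continuous_sqrt.comp <| continuous_const.add <|
      continuous_const.mul (continuous_primitive (fun _ _ => hb.intervalIntegrable _ _) α)
  refine continuousOn_const.div hden.continuousOn fun s hs => ?_
  have hI : 0 ≤ ∫ r in α..s, b r := integral_nonneg hs fun r _ => hb0 r
  exact (sqrt_pos.2 (by positivity)).ne'

lemma integral_blowupIntegrand_mono (hb : Continuous b) (hb0 : ∀ x, 0 ≤ b x) {α β v w : ℝ}
    (hβ : β ≠ 0) (hv : α ≤ v) (hvw : v ≤ w) :
    ∫ s in α..v, blowupIntegrand b α β s ≤ ∫ s in α..w, blowupIntegrand b α β s :=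
  integral_mono_interval le_rfl hv hvw
    (Eventually.of_forall fun s => blowupIntegrand_nonneg b α β s)
    ((continuousOn_blowupIntegrand hb hb0 hβ α).mono Icc_subset_Ici_self
      |>.intervalIntegrable_of_Icc (hv.trans hvw))

lemma blowupTime_lt_top_of_integral_le (hb : Continuous b) (hb0 : ∀ x, 0 ≤ b x) {α β : ℝ}
    (hβ : β ≠ 0) (M : ℝ) (hM : ∀ v, α ≤ v → ∫ s in α..v, blowupIntegrand b α β s ≤ M) :
    blowupTime b α β < ⊤ := by
  have hcont := continuousOn_blowupIntegrand hb hb0 hβ α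
  refine (integrableOn_Ioi_of_intervalIntegral_norm_bounded M α
    (fun v => (hcont.mono Icc_subset_Ici_self).integrableOn_Icc.mono_set Ioc_subset_Icc_self)
    tendsto_id ?_).lintegral_lt_top
  filter_upwards [eventually_ge_atTop α] with v hv
  simpa only [id, norm_of_nonneg (blowupIntegrand_nonneg b α β _)] using hM v hv

lemma exists_le_integral_of_blowupTime_lt_top (hb0 : ∀ x, 0 ≤ b x) {a β : ℝ} (hβ : β ≠ 0)
    (h : blowupTime b a β < ⊤) (L : ℝ) : ∃ s, L ≤ ∫ r in a..s, b r := by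
  by_contra! hL
  have hL0 : 0 < L := by simpa using hL a
  have hc : 0 < 1 / √(β ^ 2 + 2 * L) := by positivity
  refine h.ne (eq_top_iff.2 ?_)
  calc ⊤ = ∫⁻ _ in Ioi a, ENNReal.ofReal (1 / √(β ^ 2 + 2 * L)) := by
        rw [setLIntegral_const, volume_Ioi, ENNReal.mul_top (ENNReal.ofReal_pos.2 hc).ne']
    _ ≤ blowupTime b a β := by
        refine setLIntegral_mono' measurableSet_Ioi fun s hs => ENNReal.ofReal_le_ofReal ?_
        have hI : 0 ≤ ∫ r in a..s, b r := integral_nonneg (le_of_lt hs) fun r _ => hb0 r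
        exact one_div_le_one_div_of_le (sqrt_pos.2 (by positivity))
          (sqrt_le_sqrt (by linarith [hL s]))

lemma blowupTime_lt_top_of_lt_top (hb : Continuous b) (hb0 : ∀ x, 0 ≤ b x) {a β₀ : ℝ}
    (hβ₀ : β₀ ≠ 0) (h : blowupTime b a β₀ < ⊤) {α β : ℝ} (hβ : 0 < β) :
    blowupTime b α β < ⊤ := by
  -- the denominators of the two integrands at `s` differ by the constant `K - β²`
  set K := β₀ ^ 2 + 2 * ∫ r in a..α, b r
  obtain ⟨s₀, hs₀⟩ :=
    exists_le_integral_of_blowupTime_lt_top hb0 hβ₀ h (|K| + 1 + ∫ r in a..α, b r)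
  set U := max s₀ (max a α)
  have htail : ∀ s ∈ Ioi U, ENNReal.ofReal (blowupIntegrand b α β s) ≤
      2 * ENNReal.ofReal (blowupIntegrand b a β₀ s) := by
    intro s hs
    have hsplit : ∫ r in α..s, b r = (∫ r in a..s, b r) - ∫ r in a..α, b r :=
      (integral_interval_sub_left (hb.intervalIntegrable a s) (hb.intervalIntegrable a α)).symm
    have hI : |K| + 1 ≤ ∫ r in α..s, b r := by
      rw [hsplit]
      linarith [monotone_primitive hb hb0 a ((le_max_left _ _).trans (le_of_lt hs))]
    rw [← ENNReal.ofReal_ofNat 2, ← ENNReal.ofReal_mul zero_le_two]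
    refine ENNReal.ofReal_le_ofReal (one_div_sqrt_le_two_mul ?_ ?_) <;>
      linarith [le_abs_self K, neg_abs_le K, sq_nonneg β]
  have hαU : α ≤ U := (le_max_right _ _).trans (le_max_right _ _)
  have haU : a ≤ U := (le_max_left _ _).trans (le_max_right _ _)
  rw [blowupTime_eq_lintegral, ← Ioc_union_Ioi_eq_Ioi hαU]
  refine (lintegral_union_le _ _ _).trans_lt (ENNReal.add_lt_top.2 ⟨?_, ?_⟩)
  · calc ∫⁻ s in Ioc α U, ENNReal.ofReal (blowupIntegrand b α β s)
        ≤ ∫⁻ _ in Ioc α U, ENNReal.ofReal (1 / β) :=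
          setLIntegral_mono' measurableSet_Ioc fun s hs =>
            ENNReal.ofReal_le_ofReal (blowupIntegrand_le hb0 hβ hs.1.le)
      _ < ⊤ := by
          rw [setLIntegral_const]
          exact ENNReal.mul_lt_top ENNReal.ofReal_lt_top measure_Ioc_lt_top
  · calc ∫⁻ s in Ioi U, ENNReal.ofReal (blowupIntegrand b α β s)
        ≤ ∫⁻ s in Ioi U, 2 * ENNReal.ofReal (blowupIntegrand b a β₀ s) :=
          setLIntegral_mono' measurableSet_Ioi htail
      _ = 2 * ∫⁻ s in Ioi U, ENNReal.ofReal (blowupIntegrand b a β₀ s) :=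
          lintegral_const_mul' _ _ ENNReal.ofNat_ne_top
      _ ≤ 2 * blowupTime b a β₀ := by gcongr; exact lintegral_mono_set (Ioi_subset_Ioi haU)
      _ < ⊤ := ENNReal.mul_lt_top ENNReal.ofNat_lt_top h

end BlowupIntegrand

lemma sq_deriv_le_of_hasDerivAt {b φ φ' f : ℝ → ℝ} {t₁ t₂ : ℝ} (hb : Continuous b)
    (hφ : ∀ t, HasDerivAt φ (φ' t) t) (hφ' : ∀ t, HasDerivAt φ' (f t) t)
    (hφ'_nonneg : ∀ t ∈ Icc t₁ t₂, 0 ≤ φ' t) (hf : ∀ t ∈ Icc t₁ t₂, f t ≤ b (φ t)) :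
    ∀ t ∈ Icc t₁ t₂, φ' t ^ 2 ≤ φ' t₁ ^ 2 + 2 * ∫ r in φ t₁..φ t, b r := by
  set E := fun t => φ' t ^ 2 - 2 * ∫ r in φ t₁..φ t, b r
  have hE : ∀ t, HasDerivAt E (2 * φ' t * (f t - b (φ t))) t := fun t =>
    (((hφ' t).pow 2).sub
      (((hb.integral_hasStrictDerivAt _ _).hasDerivAt.comp t (hφ t)).const_mul 2)).congr_deriv
      (by ring)
  have hE_anti : AntitoneOn E (Icc t₁ t₂) := by
    refine antitoneOn_of_hasDerivWithinAt_nonpos (convex_Icc _ _)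
      (fun t _ => (hE t).continuousAt.continuousWithinAt) (fun t _ => (hE t).hasDerivWithinAt)
      fun t ht => ?_
    have ht' := interior_subset (s := Icc t₁ t₂) ht
    exact mul_nonpos_of_nonneg_of_nonpos (by linarith [hφ'_nonneg t ht'])
      (sub_nonpos.2 (hf t ht'))
  intro t ht
  have := hE_anti (left_mem_Icc.2 (ht.1.trans ht.2)) ht ht.1
  simp only [E, integral_same] at this
  linarith

lemma integral_le_of_mul_deriv_le_one {φ φ' σ : ℝ → ℝ} {t₁ t₂ : ℝ} (ht : t₁ ≤ t₂)
    (hφ : ∀ t ∈ Icc t₁ t₂, HasDerivAt φ (φ' t) t) (hφ' : ContinuousOn φ' (Icc t₁ t₂))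
    (hσ : ContinuousOn σ (φ '' Icc t₁ t₂)) (hle : ∀ t ∈ Icc t₁ t₂, σ (φ t) * φ' t ≤ 1) :
    ∫ u in φ t₁..φ t₂, σ u ≤ t₂ - t₁ := by
  rw [← uIcc_of_le ht] at hφ hφ' hσ
  have hφc : ContinuousOn φ (uIcc t₁ t₂) := fun t ht => (hφ t ht).continuousAt.continuousWithinAt
  calc ∫ u in φ t₁..φ t₂, σ u = ∫ t in t₁..t₂, (σ ∘ φ) t * φ' t :=
        (integral_comp_mul_deriv' hφ hφ' hσ).symm
    _ ≤ ∫ _ in t₁..t₂, (1 : ℝ) :=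
        integral_mono_on ht ((hσ.comp hφc (mapsTo_image _ _)).mul hφ').intervalIntegrable
          intervalIntegrable_const hle
    _ = t₂ - t₁ := by simp

noncomputable def secondPrimitive (a B : ℝ) (f : ℝ → ℝ) (t : ℝ) : ℝ :=
  a + B * t + ∫ s in (0 : ℝ)..t, (t - s) * f s

section SecondPrimitive

variable {a B : ℝ} {f : ℝ → ℝ}

@[simp]
lemma secondPrimitive_zero : secondPrimitive a B f 0 = a := by
  simp [secondPrimitive]

lemma hasDerivAt_secondPrimitive (hf : Continuous f) (t : ℝ) :
    HasDerivAt (secondPrimitive a B f) (B + ∫ s in (0 : ℝ)..t, f s) t := by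
  have hsf : Continuous fun s => s * f s := continuous_id.mul hf
  have heq : secondPrimitive a B f =
      fun t => a + B * t + (t * ∫ s in (0 : ℝ)..t, f s) - ∫ s in (0 : ℝ)..t, s * f s := by
    funext t
    simp only [secondPrimitive, sub_mul]
    rw [integral_sub (f := fun s => t * f s) ((continuous_const.mul hf).intervalIntegrable _ _)
      (hsf.intervalIntegrable _ _), intervalIntegral.integral_const_mul, add_sub_assoc]
  rw [heq]
  exact ((((hasDerivAt_id t).const_mul B).const_add a).add
    ((hasDerivAt_id t).mul (hf.integral_hasStrictDerivAt 0 t).hasDerivAt)).sub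
    (hsf.integral_hasStrictDerivAt 0 t).hasDerivAt |>.congr_deriv (by simp only [id]; ring)

lemma le_secondPrimitive (hB : 0 ≤ B) (hf0 : ∀ s, 0 ≤ f s) {t : ℝ} (ht : 0 ≤ t) :
    a ≤ secondPrimitive a B f t := by
  have : 0 ≤ ∫ s in (0 : ℝ)..t, (t - s) * f s :=
    integral_nonneg ht fun s hs => mul_nonneg (sub_nonneg.2 hs.2) (hf0 s)
  unfold secondPrimitive
  linarith [mul_nonneg hB ht]

end SecondPrimitive

lemma integral_blowupIntegrand_le_of_le_secondPrimitive {b f : ℝ → ℝ} {a B β t₀ : ℝ}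
    (hb : Continuous b) (hb0 : ∀ x, 0 ≤ b x) (hB : 0 ≤ B) (hβ : β ≠ 0) (hBβ : B ^ 2 ≤ β ^ 2)
    (hf : Continuous f) (hf0 : ∀ t, 0 ≤ f t) (ht₀ : 0 ≤ t₀)
    (hfb : ∀ t ∈ Icc 0 t₀, f t ≤ b (secondPrimitive a B f t)) :
    ∫ u in a..secondPrimitive a B f t₀, blowupIntegrand b a β u ≤ t₀ := by
  have hφ := hasDerivAt_secondPrimitive (a := a) (B := B) hf
  have hφ' : ∀ t, HasDerivAt (fun t => B + ∫ s in (0 : ℝ)..t, f s) (f t) t := fun t =>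
    (hf.integral_hasStrictDerivAt 0 t).hasDerivAt.const_add B
  have hvel : ∀ t ∈ Icc 0 t₀, 0 ≤ B + ∫ s in (0 : ℝ)..t, f s := fun t ht =>
    add_nonneg hB (integral_nonneg ht.1 fun s _ => hf0 s)
  have henergy := sq_deriv_le_of_hasDerivAt hb hφ hφ' hvel hfb
  have hmaps : secondPrimitive a B f '' Icc 0 t₀ ⊆ Ici a := by
    rintro _ ⟨t, ht, rfl⟩
    exact le_secondPrimitive hB hf0 ht.1
  simpa using integral_le_of_mul_deriv_le_one ht₀ (fun t _ => hφ t)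
    (fun t _ => (hφ' t).continuousAt.continuousWithinAt)
    ((continuousOn_blowupIntegrand hb hb0 hβ a).mono hmaps) fun t ht =>
      one_div_sqrt_mul_le_one (hvel t ht) <| by
        have := henergy t ht
        simp only [secondPrimitive_zero, integral_same, add_zero] at this
        linarith

lemma exists_le_secondPrimitive {b g X : ℝ → ℝ} {A B C t₀ : ℝ} (hb : Continuous b)
    (hb0 : ∀ x, 0 ≤ b x) (hb_mono : Monotone b) (ht₀ : 0 ≤ t₀)
    (hX : ContinuousOn X (Icc 0 t₀))
    (hX_eq : ∀ t ∈ Icc 0 t₀, X t = A + B * t + (∫ s in (0 : ℝ)..t, (t - s) * b (X s)) + g t)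
    (hg : ∀ t ∈ Icc 0 t₀, g t ≤ C) :
    ∃ f : ℝ → ℝ, Continuous f ∧ (∀ t, 0 ≤ f t) ∧
      (∀ t ∈ Icc 0 t₀, f t ≤ b (secondPrimitive (A + C) B f t)) ∧
      X t₀ ≤ secondPrimitive (A + C) B f t₀ := by
  set f : ℝ → ℝ := fun s => b (X (projIcc 0 t₀ ht₀ s))
  have hf_eq : ∀ s ∈ Icc 0 t₀, f s = b (X s) := fun s hs => by
    simp only [f, projIcc_of_mem ht₀ hs]
  have hX_le : ∀ t ∈ Icc 0 t₀, X t ≤ secondPrimitive (A + C) B f t := by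
    intro t ht
    have hint : ∫ s in (0 : ℝ)..t, (t - s) * f s = ∫ s in (0 : ℝ)..t, (t - s) * b (X s) :=
      integral_congr fun s hs => by
        rw [uIcc_of_le ht.1] at hs
        simp only [hf_eq s ⟨hs.1, hs.2.trans ht.2⟩]
    rw [secondPrimitive, hint, hX_eq t ht]
    linarith [hg t ht]
  refine ⟨f, hb.comp (hX.comp_continuous (continuous_subtype_val.comp continuous_projIcc)
    fun s => (projIcc 0 t₀ ht₀ s).2), fun s => hb0 _, fun t ht => ?_,
    hX_le t₀ (right_mem_Icc.2 ht₀)⟩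
  rw [hf_eq t ht]
  exact hb_mono (hX_le t ht)

theorem blowup_implies_condition_B_general (b : ℝ → ℝ) (hb : LocallyLipschitz b)
    (hb_nonneg : ∀ x, 0 ≤ b x) (hb_mono : Monotone b)
    (A B T : ℝ) (hB : 0 ≤ B) (hT : 0 < T)
    (g : ℝ → ℝ) (hg_cont : ContinuousOn g (Set.Ici 0))
    (X : ℝ → ℝ) (hX_cont : ContinuousOn X (Set.Ico 0 T))
    (hX_eq : ∀ t ∈ Set.Ico (0 : ℝ) T,
      X t = A + B * t + (∫ s in (0 : ℝ)..t, (t - s) * b (X s)) + g t)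
    (hX_blowup : ∀ M : ℝ, ∃ᶠ t in nhdsWithin T (Set.Iio T), M ≤ X t) :
    ∀ α β : ℝ, 0 < α → 0 < β → blowupTime b α β < ⊤ := by
  intro α β _ hβ
  have hb_cont := hb.continuous
  obtain ⟨C, hC⟩ := isCompact_Icc.bddAbove_image (hg_cont.mono fun t (ht : t ∈ Icc 0 T) => ht.1)
  have hB₁ : B + 1 ≠ 0 := by positivity
  refine blowupTime_lt_top_of_lt_top (a := A + C) hb_cont hb_nonneg hB₁ ?_ hβ
  refine blowupTime_lt_top_of_integral_le hb_cont hb_nonneg hB₁ T fun v hv => ?_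
  obtain ⟨t, hvX, ht⟩ := ((hX_blowup v).and_eventually (Ioo_mem_nhdsLT hT)).exists
  obtain ⟨f, hf, hf0, hfb, hXf⟩ := exists_le_secondPrimitive hb_cont hb_nonneg hb_mono ht.1.le
    (hX_cont.mono (Icc_subset_Ico_right ht.2)) (fun s hs => hX_eq s ⟨hs.1, hs.2.trans_lt ht.2⟩)
    fun s hs => hC (mem_image_of_mem g ⟨hs.1, hs.2.trans ht.2.le⟩)
  calc ∫ u in A + C..v, blowupIntegrand b (A + C) (B + 1) u
      ≤ ∫ u in A + C..secondPrimitive (A + C) B f t, blowupIntegrand b (A + C) (B + 1) u :=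
        integral_blowupIntegrand_mono hb_cont hb_nonneg hB₁ hv (hvX.trans hXf)
    _ ≤ t := integral_blowupIntegrand_le_of_le_secondPrimitive hb_cont hb_nonneg hB hB₁
        (by nlinarith) hf hf0 ht.1.le hfb
    _ ≤ T := ht.2.le

/-- If a solution of `X(t) = A + Bt + ∫₀ᵗ (t-s) b(X(s)) ds + g(t)` blows up at
the finite time `T` (i.e. `limsup_{t→T⁻} X(t) = +∞`), then `T(α,β) < ∞` for
all `α, β > 0`. -/
theorem blowup_implies_condition_B (b : ℝ → ℝ) (hb : LocallyLipschitz b)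
    (hb_nonneg : ∀ x, 0 ≤ b x) (hb_mono : Monotone b)
    (A B T : ℝ) (hA : 0 ≤ A) (hB : 0 ≤ B) (hT : 0 < T)
    (g : ℝ → ℝ) (hg_cont : ContinuousOn g (Set.Ici 0))
    (X : ℝ → ℝ) (hX_cont : ContinuousOn X (Set.Ico 0 T))
    (hX_eq : ∀ t ∈ Set.Ico (0 : ℝ) T,
      X t = A + B * t + (∫ s in (0 : ℝ)..t, (t - s) * b (X s)) + g t)
    (hX_blowup : ∀ M : ℝ, ∃ᶠ t in nhdsWithin T (Set.Iio T), M ≤ X t) :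
    ∀ α β : ℝ, 0 < α → 0 < β → blowupTime b α β < ⊤ :=
  blowup_implies_condition_B_general b hb hb_nonneg hb_mono A B T hB hT g hg_cont X hX_cont hX_eq
    hX_blowup
end

section
/- Let δ > 0 and define b : ℝ → ℝ by b(r) = |r| (log₊ |r|)^δ, where log₊ z := log(max(z, e)). Then for α, β > 0 the quantity T(α, β) := ∫_α^∞ ds / (β² + 2∫_α^s b(r) dr)^{1/2} is finite if and only if δ > 2. -/
/-!
Write `L(r) = log₊ |r| ≥ 1`. For `s` large the primitive `∫_α^s b` is comparable to
`s² (log s)^δ`: it is at most `2 s² (log s)²` when `δ ≤ 2`, because `L^δ ≤ L²`, and at least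
`s² (log s)^δ / (4·2^δ)`, already from `[√s, s]`, where `log r ≥ (log s)/2`. So the integrand
of `T` behaves like `1 / (s (log s)^(δ/2))` at infinity, and `T` is finite exactly when the
Bertrand integral `∫^∞ ds / (s (log s)^p)`, `p = δ/2`, converges, that is when `p > 1`. On a
bounded interval the integrand is at most `1/|β|`.
-/

open MeasureTheory Set

open Filter Real

theorem not_integrableOn_Ioi_inv_mul_log (a : ℝ) :
    ¬ IntegrableOn (fun x => (x * log x)⁻¹) (Ioi a) := by
  have hderiv : ∀ᶠ x in atTop, HasDerivAt (fun x => log (log x)) (x * log x)⁻¹ x := by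
    filter_upwards [Ioi_mem_atTop 1] with x hx
    have hx0 : x ≠ 0 := (zero_lt_one.trans hx).ne'
    exact ((hasDerivAt_log (log_pos hx).ne').comp x (hasDerivAt_log hx0)).congr_deriv
      (by rw [mul_inv, mul_comm])
  have htend : Tendsto (fun x => ‖log (log x)‖) atTop atTop :=
    tendsto_norm_atTop_atTop.comp (tendsto_log_atTop.comp tendsto_log_atTop)
  exact not_integrableOn_of_tendsto_norm_atTop_of_deriv_isBigO_filter atTop (Ioi_mem_atTop a)
    (hderiv.mono fun x hx => hx.differentiableAt) htend
    (EventuallyEq.isBigO (hderiv.mono fun x hx => hx.deriv))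

theorem setLIntegral_Ioi_inv_mul_log_eq_top {a : ℝ} (ha : 1 ≤ a) :
    ∫⁻ x in Ioi a, ENNReal.ofReal (x * log x)⁻¹ = ⊤ := by
  have hnonneg : ∀ x ∈ Ioi a, 0 ≤ (x * log x)⁻¹ := fun x hx =>
    inv_nonneg.2 (mul_nonneg (by linarith [hx.out]) (log_nonneg (by linarith [hx.out])))
  by_contra h
  refine not_integrableOn_Ioi_inv_mul_log a
    ((lintegral_ofReal_ne_top_iff_integrable ?_ ?_).1 h)
  · exact (measurable_id.mul measurable_log).inv.aestronglyMeasurable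
  · exact (ae_restrict_iff' measurableSet_Ioi).2 (ae_of_all _ hnonneg)

theorem integrableOn_Ioi_inv_mul_log_rpow {a p : ℝ} (ha : 1 < a) (hp : 1 < p) :
    IntegrableOn (fun x => (x * log x ^ p)⁻¹) (Ioi a) := by
  have hderiv : ∀ x ∈ Ici a,
      HasDerivAt (fun x => (1 - p)⁻¹ * log x ^ (1 - p)) (x * log x ^ p)⁻¹ x := by
    intro x hx
    have hx0 : 0 < x := by linarith [hx.out]
    have hlog : 0 < log x := log_pos (by linarith [hx.out])
    have hp' : 1 - p ≠ 0 := by linarith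
    refine (((hasDerivAt_rpow_const (Or.inl hlog.ne')).comp x
      (hasDerivAt_log hx0.ne')).const_mul (1 - p)⁻¹).congr_deriv ?_
    rw [rpow_sub hlog, rpow_sub hlog, rpow_one]
    field_simp
  have hnonneg : ∀ x ∈ Ioi a, 0 ≤ (x * log x ^ p)⁻¹ := fun x hx =>
    inv_nonneg.2 (mul_nonneg (by linarith [hx.out])
      (rpow_nonneg (log_nonneg (by linarith [hx.out])) p))
  have htend : Tendsto (fun x => (1 - p)⁻¹ * log x ^ (1 - p)) atTop (nhds 0) := by
    have := ((tendsto_rpow_neg_atTop (by linarith : 0 < p - 1)).comp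
      tendsto_log_atTop).const_mul (1 - p)⁻¹
    rw [mul_zero] at this
    convert this using 3
    simp only [Function.comp, neg_sub]
  exact integrableOn_Ioi_deriv_of_nonneg' hderiv hnonneg htend

theorem blowupTime_lt_top_iff_setLIntegral_Ioi_lt_top {b : ℝ → ℝ} {α β s₀ : ℝ}
    (hb : ∀ r, 0 ≤ b r) (hβ : β ≠ 0) (hs₀ : α ≤ s₀) :
    blowupTime b α β < ⊤ ↔
      ∫⁻ s in Ioi s₀, ENNReal.ofReal (1 / √(β ^ 2 + 2 * ∫ r in α..s, b r)) < ⊤ := by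
  refine ⟨fun h => (lintegral_mono_set (Ioi_subset_Ioi hs₀)).trans_lt h, fun h => ?_⟩
  have hhead : ∫⁻ s in Ioc α s₀, ENNReal.ofReal (1 / √(β ^ 2 + 2 * ∫ r in α..s, b r))
      ≤ ∫⁻ _ in Ioc α s₀, ENNReal.ofReal (1 / |β|) := by
    refine setLIntegral_mono' measurableSet_Ioc fun s hs => ENNReal.ofReal_le_ofReal ?_
    have hI : 0 ≤ ∫ r in α..s, b r := intervalIntegral.integral_nonneg hs.1.le fun r _ => hb r
    refine one_div_le_one_div_of_le (abs_pos.2 hβ) ?_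
    rw [← sqrt_sq_eq_abs]
    exact sqrt_le_sqrt (by linarith)
  rw [setLIntegral_const] at hhead
  rw [blowupTime, ← Ioc_union_Ioi_eq_Ioi hs₀]
  refine (lintegral_union_le _ _ _).trans_lt (ENNReal.add_lt_top.2 ⟨hhead.trans_lt ?_, h⟩)
  exact ENNReal.mul_lt_top ENNReal.ofReal_lt_top measure_Ioc_lt_top

noncomputable def logWeight (δ r : ℝ) : ℝ := |r| * log (max |r| (exp 1)) ^ δ

theorem one_le_log_max_exp_one (x : ℝ) : 1 ≤ log (max x (exp 1)) := by
  simpa using log_le_log (exp_pos 1) (le_max_right x (exp 1))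

theorem logWeight_nonneg (δ r : ℝ) : 0 ≤ logWeight δ r :=
  mul_nonneg (abs_nonneg r) (rpow_nonneg (zero_le_one.trans (one_le_log_max_exp_one _)) δ)

theorem continuous_logWeight (δ : ℝ) : Continuous (logWeight δ) := by
  have hlog : Continuous fun r : ℝ => log (max |r| (exp 1)) :=
    (continuous_abs.max continuous_const).log fun r =>
      ((exp_pos 1).trans_le (le_max_right _ _)).ne'
  exact continuous_abs.mul (hlog.rpow_const fun r =>
    Or.inl (zero_lt_one.trans_le (one_le_log_max_exp_one _)).ne')

theorem logWeight_le {δ r s : ℝ} (hδ : δ ≤ 2) (hr : |r| ≤ s) (hs : exp 1 ≤ s) :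
    logWeight δ r ≤ s * log s ^ 2 := by
  have hL := one_le_log_max_exp_one |r|
  have hLs : log (max |r| (exp 1)) ≤ log s :=
    log_le_log ((exp_pos 1).trans_le (le_max_right _ _)) (max_le hr hs)
  calc logWeight δ r ≤ s * log (max |r| (exp 1)) ^ (2 : ℝ) :=
        mul_le_mul hr (rpow_le_rpow_of_exponent_le hL hδ) (by positivity)
          ((abs_nonneg r).trans hr)
    _ ≤ s * log s ^ 2 := by
        rw [rpow_two]
        gcongr
        linarith [exp_pos 1]

theorem log_rpow_mul_le_logWeight {δ t r : ℝ} (hδ : 0 ≤ δ) (ht : 1 ≤ t) (hr : t ≤ r) :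
    log t ^ δ * r ≤ logWeight δ r := by
  have hr0 : 0 ≤ r := by linarith
  rw [logWeight, abs_of_nonneg hr0, mul_comm]
  refine mul_le_mul_of_nonneg_left (rpow_le_rpow (log_nonneg ht) ?_ hδ) hr0
  exact log_le_log (by linarith) (hr.trans (le_max_left _ _))

theorem integral_logWeight_le {δ α s : ℝ} (hδ : δ ≤ 2) (hα : |α| ≤ s) (hs : exp 1 ≤ s) :
    ∫ r in α..s, logWeight δ r ≤ 2 * (s * log s) ^ 2 := by
  have hαs : α ≤ s := (le_abs_self α).trans hα
  have hbound : ∀ r ∈ Icc α s, logWeight δ r ≤ s * log s ^ 2 := fun r hr =>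
    logWeight_le hδ (abs_le.2 ⟨by linarith [neg_abs_le α, hr.1], hr.2⟩) hs
  have hmono := intervalIntegral.integral_mono_on hαs
    ((continuous_logWeight δ).intervalIntegrable α s)
    (intervalIntegrable_const : IntervalIntegrable (fun _ => s * log s ^ 2) volume α s) hbound
  rw [intervalIntegral.integral_const, smul_eq_mul] at hmono
  have : 0 ≤ s * log s ^ 2 := mul_nonneg (abs_nonneg α |>.trans hα) (sq_nonneg _)
  nlinarith [neg_abs_le α]

theorem integral_logWeight_ge {δ α s : ℝ} (hδ : 0 ≤ δ) (hα : α ≤ √s) (hs : exp 1 ≤ √s) :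
    s ^ 2 * log s ^ δ / (4 * 2 ^ δ) ≤ ∫ r in α..s, logWeight δ r := by
  have hs2 : 2 ≤ √s := by linarith [add_one_le_exp (1 : ℝ)]
  have hs0 : 0 ≤ s := sqrt_pos.1 (by linarith) |>.le
  have hsqrt_le : √s ≤ s := by nlinarith [sq_sqrt hs0]
  have hlog : 0 ≤ log s := log_nonneg (by nlinarith [sq_sqrt hs0])
  have hint := (continuous_logWeight δ).intervalIntegrable (μ := volume)
  have hhead : 0 ≤ ∫ r in α..√s, logWeight δ r :=
    intervalIntegral.integral_nonneg hα fun r _ => logWeight_nonneg δ r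
  have htail : (log s / 2) ^ δ * ((s ^ 2 - s) / 2) ≤ ∫ r in √s..s, logWeight δ r := by
    have : ∫ r in √s..s, log √s ^ δ * r ≤ ∫ r in √s..s, logWeight δ r :=
      intervalIntegral.integral_mono_on hsqrt_le
        ((continuous_const.mul continuous_id).intervalIntegrable _ _) (hint _ _)
        fun r hr => log_rpow_mul_le_logWeight hδ (by linarith) hr.1
    rwa [intervalIntegral.integral_const_mul, integral_id, sq_sqrt hs0, log_sqrt hs0] at this
  rw [← intervalIntegral.integral_add_adjacent_intervals (hint α √s) (hint √s s)]
  rw [div_rpow hlog zero_le_two] at htail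
  have h2δ : 0 < (2 : ℝ) ^ δ := by positivity
  have hsq : s ^ 2 / 2 ≤ s ^ 2 - s := by nlinarith [sq_sqrt hs0]
  calc s ^ 2 * log s ^ δ / (4 * 2 ^ δ) = log s ^ δ / 2 ^ δ * (s ^ 2 / 2 / 2) := by
        field_simp; ring
    _ ≤ log s ^ δ / 2 ^ δ * ((s ^ 2 - s) / 2) := by gcongr
    _ ≤ _ := by linarith

theorem blowupTime_logWeight_eq_top {δ : ℝ} (hδ : δ ≤ 2) (α : ℝ) {β : ℝ} (hβ : β ≠ 0) :
    blowupTime (logWeight δ) α β = ⊤ := by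
  set s₀ := max |α| (exp 1)
  set c := (√(β ^ 2 + 4))⁻¹
  have hc : 0 < c := by positivity
  have hcompare : ∀ s ∈ Ioi s₀, ENNReal.ofReal (c * (s * log s)⁻¹) ≤
      ENNReal.ofReal (1 / √(β ^ 2 + 2 * ∫ r in α..s, logWeight δ r)) := by
    intro s hs
    have hαs : |α| ≤ s := (le_max_left _ _).trans hs.out.le
    have hes : exp 1 ≤ s := (le_max_right _ _).trans hs.out.le
    have hslog : 1 ≤ s * log s := one_le_mul_of_one_le_of_one_le
      (by linarith [add_one_le_exp (1 : ℝ)]) (by simpa using log_le_log (exp_pos 1) hes)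
    have hI := integral_logWeight_le hδ hαs hes
    have hI0 : 0 ≤ ∫ r in α..s, logWeight δ r := intervalIntegral.integral_nonneg
      ((le_abs_self α).trans hαs) fun r _ => logWeight_nonneg δ r
    have hF : 0 < β ^ 2 + 2 * ∫ r in α..s, logWeight δ r := by positivity
    have hsqrt : √(β ^ 2 + 2 * ∫ r in α..s, logWeight δ r) ≤ √(β ^ 2 + 4) * (s * log s) := by
      rw [← sqrt_sq (by linarith : 0 ≤ s * log s), ← sqrt_mul (by positivity)]
      have : 1 ≤ (s * log s) ^ 2 := one_le_pow₀ hslog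
      exact sqrt_le_sqrt (by nlinarith [sq_nonneg β])
    apply ENNReal.ofReal_le_ofReal
    rw [one_div, ← mul_inv]
    exact inv_anti₀ (sqrt_pos.2 hF) hsqrt
  have hs₀ : 1 ≤ s₀ := (one_le_exp zero_le_one).trans (le_max_right _ _)
  rw [eq_top_iff, blowupTime]
  calc ⊤ = ENNReal.ofReal c * ∫⁻ s in Ioi s₀, ENNReal.ofReal (s * log s)⁻¹ := by
        rw [setLIntegral_Ioi_inv_mul_log_eq_top hs₀, ENNReal.mul_top (by simpa using hc)]
    _ = ∫⁻ s in Ioi s₀, ENNReal.ofReal (c * (s * log s)⁻¹) := by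
        simp_rw [ENNReal.ofReal_mul hc.le]
        exact (lintegral_const_mul' _ _ ENNReal.ofReal_ne_top).symm
    _ ≤ ∫⁻ s in Ioi s₀, ENNReal.ofReal (1 / √(β ^ 2 + 2 * ∫ r in α..s, logWeight δ r)) :=
        setLIntegral_mono' measurableSet_Ioi hcompare
    _ ≤ _ := lintegral_mono_set (Ioi_subset_Ioi ((le_abs_self α).trans (le_max_left _ _)))

theorem blowupTime_logWeight_lt_top {δ : ℝ} (hδ : 2 < δ) (α : ℝ) {β : ℝ} (hβ : β ≠ 0) :
    blowupTime (logWeight δ) α β < ⊤ := by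
  set t := max |α| (exp 1)
  have ht : 1 < t := by linarith [add_one_le_exp (1 : ℝ), le_max_right |α| (exp 1)]
  set C := √(2 * 2 ^ δ)
  have hC : 0 < C := by positivity
  have hcompare : ∀ s ∈ Ioi (t ^ 2),
      ENNReal.ofReal (1 / √(β ^ 2 + 2 * ∫ r in α..s, logWeight δ r)) ≤
        ENNReal.ofReal (C * (s * log s ^ (δ / 2))⁻¹) := by
    intro s hs
    have hts : t ≤ √s := ((lt_sqrt (by linarith)).2 hs).le
    have hI := integral_logWeight_ge (δ := δ) (by linarith)
      ((le_abs_self α).trans ((le_max_left _ _).trans hts)) ((le_max_right _ _).trans hts)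
    have hs1 : 1 < s := by nlinarith [hs.out]
    have hlog : 0 < log s := log_pos hs1
    have hsq : (s * log s ^ (δ / 2) / C) ^ 2 = s ^ 2 * log s ^ δ / (2 * 2 ^ δ) := by
      have hpow : (log s ^ (δ / 2)) ^ 2 = log s ^ δ := by
        rw [← rpow_natCast, ← rpow_mul hlog.le]
        norm_num
      rw [div_pow, mul_pow, sq_sqrt (by positivity), hpow]
    have hlower : s * log s ^ (δ / 2) / C ≤ √(β ^ 2 + 2 * ∫ r in α..s, logWeight δ r) := by
      have hI0 : 0 ≤ s ^ 2 * log s ^ δ / (4 * 2 ^ δ) := by positivity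
      rw [le_sqrt (by positivity) (by linarith [sq_nonneg β]), hsq]
      have hhalf : s ^ 2 * log s ^ δ / (2 * 2 ^ δ) = 2 * (s ^ 2 * log s ^ δ / (4 * 2 ^ δ)) := by
        ring
      linarith [sq_nonneg β]
    apply ENNReal.ofReal_le_ofReal
    rw [one_div]
    exact (inv_anti₀ (by positivity) hlower).trans_eq (by rw [inv_div, div_eq_mul_inv])
  have hαt : α ≤ t ^ 2 := by nlinarith [le_abs_self α, le_max_left |α| (exp 1)]
  rw [blowupTime_lt_top_iff_setLIntegral_Ioi_lt_top (logWeight_nonneg δ) hβ hαt]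
  refine (setLIntegral_mono' measurableSet_Ioi hcompare).trans_lt ?_
  have hbertrand := integrableOn_Ioi_inv_mul_log_rpow (a := t ^ 2) (p := δ / 2)
    (by nlinarith) (by linarith)
  exact (hbertrand.const_mul C).lintegral_lt_top

theorem blowupTime_log_power_finite_iff_general (δ : ℝ)
    (α β : ℝ) (hβ : 0 < β) :
    blowupTime (fun r => |r| * Real.log (max |r| (Real.exp 1)) ^ δ) α β < ⊤ ↔
      2 < δ := by
  refine ⟨fun hfin => ?_, fun hδ => blowupTime_logWeight_lt_top hδ α hβ.ne'⟩
  by_contra! hδ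
  exact (blowupTime_logWeight_eq_top hδ α hβ.ne').not_lt hfin

/-- For `b(r) = |r| (log₊ |r|)^δ` with `log₊ z = log (max z e)`, the quantity
`T(α,β)` is finite if and only if `δ > 2`. -/
theorem blowupTime_log_power_finite_iff (δ : ℝ) (hδ : 0 < δ)
    (α β : ℝ) (hα : 0 < α) (hβ : 0 < β) :
    blowupTime (fun r => |r| * Real.log (max |r| (Real.exp 1)) ^ δ) α β < ⊤ ↔
      2 < δ :=
  blowupTime_log_power_finite_iff_general δ α β hβ
end

section
/- Let (B_t)_{t ≥ 0} be a standard one-dimensional Brownian motion. If f : [0, 1] → ℝ is continuous with f(0) = 0, then for every ε > 0, P( sup_{0 ≤ t ≤ 1} |B_t − f(t)| < ε ) > 0. -/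
open MeasureTheory ProbabilityTheory

/-- A standard one-dimensional Brownian motion on a probability space
`(Ω, P)`: it starts at `0`, has continuous sample paths, its increments over
`[s,t]` (for `0 ≤ s ≤ t`) are Gaussian with mean `0` and variance `t - s`,
and increments over disjoint consecutive intervals are independent. -/
structure IsBrownianMotion {Ω : Type*} [MeasurableSpace Ω] (P : Measure Ω)
    (B : ℝ → Ω → ℝ) : Prop where
  isProbability : IsProbabilityMeasure P
  start : ∀ ω, B 0 ω = 0
  continuous_paths : ∀ ω, Continuous fun t => B t ω
  measurable : ∀ t, Measurable (B t)
  gaussian_increments : ∀ s t : ℝ, 0 ≤ s → s ≤ t →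
    P.map (fun ω => B t ω - B s ω) = gaussianReal 0 (t - s).toNNReal
  indep_increments : ∀ (n : ℕ) (τ : ℕ → ℝ), Monotone τ → (∀ i, 0 ≤ τ i) →
    iIndepFun
      (fun i : Fin n => fun ω => B (τ (i + 1)) ω - B (τ i) ω) P

/-!
Approximate `f` uniformly by a Lipschitz function `g` with `g 0 = 0` and cut `[0, 1]` into `N`
blocks of length `h = 1 / N`. On each block require that the Brownian path oscillates by at most
`ε / 4` and that its increment matches the increment of `g` up to `ε h / 4`. These block events are
independent, and on their intersection the path stays in the `ε`-tube around `f`.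

A block event has positive probability once `h` is small: the increment condition has probability
of order `√h` (a Gaussian density of size `h^(-1/2)` on a window of width `ε h / 2`, centred at
most `L h` away from `0`), whereas by Lévy's maximal inequality and Chebyshev's inequality the
oscillation exceeds `ε / 4` with probability at most `2 h / (ε / 4) ^ 2`. Path events are reached
through their dyadic approximations, which depend on finitely many independent increments.
-/

open Filter Topology Set
open scoped ENNReal NNReal

namespace BrownianSupport

theorem exists_lipschitzOnWith_abs_sub_lt {f : ℝ → ℝ} {a b : ℝ} (hf : ContinuousOn f (Icc a b))
    {ε : ℝ} (hε : 0 < ε) :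
    ∃ (g : ℝ → ℝ) (L : ℝ≥0), LipschitzOnWith L g (Icc a b) ∧ g a = f a ∧
      ∀ x ∈ Icc a b, |g x - f x| < ε := by
  obtain ⟨p, hp⟩ := exists_polynomial_near_of_continuousOn a b f hf (ε / 2) (half_pos hε)
  have hsmooth : ContDiff ℝ 1 fun x => p.eval x - (p.eval a - f a) := by
    simpa using (p.contDiff_aeval (𝕜 := ℝ) 1).sub contDiff_const
  obtain ⟨L, hL⟩ := hsmooth.contDiffOn.exists_lipschitzOnWith one_ne_zero (convex_Icc a b)
    isCompact_Icc
  refine ⟨_, L, hL, by ring, fun x hx => ?_⟩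
  have ha : a ∈ Icc a b := ⟨le_rfl, hx.1.trans hx.2⟩
  calc |p.eval x - (p.eval a - f a) - f x| = |(p.eval x - f x) - (p.eval a - f a)| := by ring_nf
    _ ≤ |p.eval x - f x| + |p.eval a - f a| := abs_sub _ _
    _ < ε / 2 + ε / 2 := add_lt_add (hp x hx) (hp a ha)
    _ = ε := add_halves ε

theorem dyadic_mem_Icc {a h : ℝ} (hh : 0 ≤ h) {K k : ℕ} (hk : k ≤ 2 ^ K) :
    a + k * (h / 2 ^ K) ∈ Icc a (a + h) := by
  have hk' : (k : ℝ) ≤ 2 ^ K := by exact_mod_cast hk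
  have hle : (k : ℝ) * (h / 2 ^ K) ≤ h :=
    calc (k : ℝ) * (h / 2 ^ K) ≤ 2 ^ K * (h / 2 ^ K) := by gcongr
      _ = h := by field_simp
  exact ⟨le_add_of_nonneg_right (by positivity), by linarith⟩

theorem dyadic_eq_succ (a h : ℝ) (K k : ℕ) :
    a + k * (h / 2 ^ K) = a + ((2 * k : ℕ) : ℝ) * (h / 2 ^ (K + 1)) := by
  push_cast
  rw [pow_succ]
  field_simp

theorem exists_tendsto_dyadic {a h u : ℝ} (hh : 0 < h) (hu : u ∈ Icc a (a + h)) :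
    ∃ k : ℕ → ℕ, (∀ K, k K ≤ 2 ^ K) ∧
      Tendsto (fun K => a + k K * (h / 2 ^ K)) atTop (𝓝 u) := by
  have hw : ∀ K : ℕ, 0 < h / 2 ^ K := fun K => by positivity
  have hx : ∀ K : ℕ, 0 ≤ (u - a) / (h / 2 ^ K) := fun K => div_nonneg (by linarith [hu.1]) (hw K).le
  refine ⟨fun K => ⌊(u - a) / (h / 2 ^ K)⌋₊, fun K => Nat.floor_le_of_le ?_, ?_⟩
  · rw [div_le_iff₀ (hw K)]
    push_cast
    field_simp
    linarith [hu.2]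
  · have hlim : Tendsto (fun K : ℕ => u - h / 2 ^ K) atTop (𝓝 u) := by
      simpa using tendsto_const_nhds.sub
        ((tendsto_const_div_atTop_nhds_zero_nat h).comp
          (tendsto_pow_atTop_atTop_of_one_lt one_lt_two))
    refine tendsto_of_tendsto_of_tendsto_of_le_of_le hlim tendsto_const_nhds
      (fun K => ?_) (fun K => ?_)
    · have := Nat.lt_floor_add_one ((u - a) / (h / 2 ^ K))
      rw [div_lt_iff₀ (hw K)] at this
      dsimp only
      linarith
    · have := Nat.floor_le (hx K)
      rw [le_div_iff₀ (hw K)] at this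
      dsimp only
      linarith

theorem forall_mem_Icc_iff_forall_dyadic {g : ℝ → ℝ} (hg : Continuous g) {C : Set ℝ}
    (hC : IsClosed C) {a h : ℝ} (hh : 0 < h) :
    (∀ u ∈ Icc a (a + h), g u ∈ C) ↔ ∀ K k : ℕ, k ≤ 2 ^ K → g (a + k * (h / 2 ^ K)) ∈ C := by
  refine ⟨fun H K k hk => H _ (dyadic_mem_Icc hh.le hk), fun H u hu => ?_⟩
  obtain ⟨k, hk, hlim⟩ := exists_tendsto_dyadic hh hu
  exact hC.mem_of_tendsto ((hg.tendsto u).comp hlim) (Eventually.of_forall fun K => H K _ (hk K))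

theorem exists_lt_mem_Icc_mul {h t : ℝ} (hh : 0 < h) {N : ℕ} (hN : 0 < N)
    (ht : t ∈ Icc 0 (N * h)) : ∃ j < N, t ∈ Icc (j * h) (j * h + h) := by
  rcases lt_or_ge ⌊t / h⌋₊ N with hlt | hge
  · refine ⟨_, hlt, ?_, ?_⟩
    · have := Nat.floor_le (div_nonneg ht.1 hh.le)
      rwa [le_div_iff₀ hh] at this
    · have := Nat.lt_floor_add_one (t / h)
      rw [div_lt_iff₀ hh] at this
      linarith
  · have hNt : (N : ℝ) * h ≤ t := by
      have := (Nat.cast_le.2 hge).trans (Nat.floor_le (div_nonneg ht.1 hh.le))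
      rwa [le_div_iff₀ hh] at this
    refine ⟨N - 1, by omega, ?_, ?_⟩ <;> push_cast [Nat.one_le_iff_ne_zero.2 hN.ne'] <;>
      linarith [ht.2]

theorem abs_sub_le_of_mem_block {g : ℝ → ℝ} {L : ℝ≥0} {h : ℝ} {N j : ℕ}
    (hg : LipschitzOnWith L g (Icc 0 (N * h))) (hh : 0 < h) (hj : j < N) {u : ℝ}
    (hu : u ∈ Icc (j * h) (j * h + h)) : |g u - g (j * h)| ≤ L * h := by
  have hj' : (j : ℝ) + 1 ≤ N := by exact_mod_cast hj
  have hI : ∀ v ∈ Icc (j * h) (j * h + h), v ∈ Icc 0 (N * h) := fun v hv =>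
    ⟨(by positivity : (0 : ℝ) ≤ j * h).trans hv.1, hv.2.trans (by nlinarith)⟩
  have := hg.dist_le_mul u (hI u hu) _ (hI _ ⟨le_rfl, by linarith⟩)
  rw [Real.dist_eq, Real.dist_eq, abs_of_nonneg (a := u - j * h) (by linarith [hu.1])] at this
  exact this.trans (by gcongr; linarith [hu.2])

theorem abs_sub_le_of_blocks {φ ψ : ℝ → ℝ} {h r η ρ : ℝ} {N : ℕ} (hh : 0 < h) (hN : 0 < N)
    (h0 : φ 0 = ψ 0)
    (hφ : ∀ j < N, ∀ u ∈ Icc (j * h) (j * h + h), |φ u - φ (j * h)| ≤ r)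
    (hψ : ∀ j < N, ∀ u ∈ Icc (j * h) (j * h + h), |ψ u - ψ (j * h)| ≤ ρ)
    (hstep : ∀ j < N, |φ (j * h + h) - φ (j * h) - (ψ (j * h + h) - ψ (j * h))| ≤ η) :
    ∀ t ∈ Icc 0 (N * h), |φ t - ψ t| ≤ r + N * η + ρ := by
  intro t ht
  obtain ⟨j, hj, hjt⟩ := exists_lt_mem_Icc_mul hh hN ht
  have hgrid : |φ (j * h) - ψ (j * h)| ≤ j * η := by
    have := dist_le_range_sum_of_dist_le (f := fun i : ℕ => φ (i * h) - ψ (i * h)) j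
      (d := fun _ => η) fun {i} hi => by
        rw [Real.dist_eq, abs_sub_comm]
        push_cast
        convert hstep i (hi.trans hj) using 2
        ring_nf
    simpa [Real.dist_eq, h0, abs_sub_comm] using this
  have hjη : (j : ℝ) * η ≤ N * η := by
    have hη : 0 ≤ η := (abs_nonneg _).trans (hstep 0 hN)
    gcongr
  calc |φ t - ψ t| = |(φ t - φ (j * h)) + (φ (j * h) - ψ (j * h)) - (ψ t - ψ (j * h))| := by
        ring_nf
    _ ≤ |φ t - φ (j * h)| + |φ (j * h) - ψ (j * h)| + |ψ t - ψ (j * h)| :=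
        (abs_sub _ _).trans (by gcongr; exact abs_add_le _ _)
    _ ≤ r + N * η + ρ := by gcongr; exacts [hφ j hj t hjt, hgrid.trans hjη, hψ j hj t hjt]

theorem gaussianReal_Iic_zero_eq_Ici_zero (v : ℝ≥0) :
    gaussianReal 0 v (Iic 0) = gaussianReal 0 v (Ici 0) := by
  have hneg := gaussianReal_map_neg (μ := 0) (v := v)
  rw [neg_zero] at hneg
  conv_lhs => rw [← hneg]
  rw [Measure.map_apply measurable_neg measurableSet_Iic]
  congr 1
  ext y
  simp

theorem half_le_gaussianReal_Ici_zero (v : ℝ≥0) : 1 / 2 ≤ gaussianReal 0 v (Ici 0) := by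
  have hcover : 1 ≤ gaussianReal 0 v (Ici 0) * 2 := by
    calc 1 = gaussianReal 0 v (Iic 0 ∪ Ici 0) := by rw [Iic_union_Ici, measure_univ]
      _ ≤ gaussianReal 0 v (Iic 0) + gaussianReal 0 v (Ici 0) := measure_union_le _ _
      _ = gaussianReal 0 v (Ici 0) * 2 := by rw [gaussianReal_Iic_zero_eq_Ici_zero, mul_two]
  exact ENNReal.div_le_of_le_mul hcover

theorem gaussianReal_le_abs_le_div_sq (v : ℝ≥0) {x : ℝ} (hx : 0 < x) :
    gaussianReal 0 v {y | x ≤ |y|} ≤ ENNReal.ofReal (v / x ^ 2) := by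
  simpa [integral_id_gaussianReal, variance_id_gaussianReal] using
    meas_ge_le_variance_div_sq (memLp_id_gaussianReal (μ := 0) (v := v) 2) hx

theorem ofReal_le_gaussianReal_abs_sub_le {v : ℝ≥0} (hv : v ≠ 0) (d l : ℝ) :
    ENNReal.ofReal (2 * l * gaussianPDFReal 0 v (|d| + l)) ≤
      gaussianReal 0 v {y | |y - d| ≤ l} := by
  have hS : {y : ℝ | |y - d| ≤ l} = Icc (d - l) (d + l) := by
    ext y
    simp only [mem_ofPred_eq, abs_le, mem_Icc]
    constructor <;> rintro ⟨h₁, h₂⟩ <;> constructor <;> linarith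
  have hpdf : ∀ y ∈ Icc (d - l) (d + l),
      ENNReal.ofReal (gaussianPDFReal 0 v (|d| + l)) ≤ gaussianPDF 0 v y := by
    intro y hy
    have hy' : |y| ≤ |d| + l :=
      abs_le.2 ⟨by linarith [hy.1, neg_abs_le d], by linarith [hy.2, le_abs_self d]⟩
    rw [gaussianPDF]
    gcongr
    simp only [gaussianPDFReal, sub_zero]
    gcongr _ * Real.exp (-?_ / _)
    exact sq_le_sq' (by linarith [neg_abs_le y]) ((le_abs_self y).trans hy')
  rw [hS, gaussianReal_apply 0 hv]
  calc ENNReal.ofReal (2 * l * gaussianPDFReal 0 v (|d| + l))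
      = ∫⁻ _ in Icc (d - l) (d + l), ENNReal.ofReal (gaussianPDFReal 0 v (|d| + l)) := by
        rw [setLIntegral_const, Real.volume_Icc,
          ← ENNReal.ofReal_mul (gaussianPDFReal_nonneg _ _ _), mul_comm]
        ring_nf
    _ ≤ ∫⁻ y in Icc (d - l) (d + l), gaussianPDF 0 v y :=
        setLIntegral_mono (measurable_gaussianPDF 0 v) hpdf

section Independence

open Function

variable {Ω ι κ : Type*} {mΩ : MeasurableSpace Ω} {μ : Measure Ω}

theorem iIndep_biSup_of_pairwise_disjoint {m : ι → MeasurableSpace Ω} (h_le : ∀ i, m i ≤ mΩ)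
    (h_indep : iIndep m μ) {S : κ → Set ι} (hS : Pairwise (Disjoint on S)) :
    iIndep (fun k => ⨆ i ∈ S k, m i) μ := by
  classical
  have := h_indep.isProbabilityMeasure
  rw [iIndep_iff]
  intro s
  induction s using Finset.induction_on with
  | empty => intro f _; simp
  | insert a s ha ih =>
    intro f hf
    have hdisj : Disjoint (S a) (⋃ k ∈ s, S k) :=
      disjoint_iUnion₂_right.2 fun k hk => hS fun hak => ha (hak ▸ hk)
    have hle : ∀ k ∈ s, (⨆ i ∈ S k, m i) ≤ ⨆ i ∈ ⋃ k ∈ s, S k, m i := fun k hk =>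
      biSup_mono fun i hi => mem_biUnion hk hi
    have hrest : MeasurableSet[⨆ i ∈ ⋃ k ∈ s, S k, m i] (⋂ k ∈ s, f k) :=
      Finset.measurableSet_biInter s fun k hk =>
        hle k hk _ (hf k (Finset.mem_insert_of_mem hk))
    rw [Finset.set_biInter_insert, Finset.prod_insert ha,
      (Indep_iff _ _ _).1 (indep_iSup_of_disjoint h_le h_indep hdisj) _ _
        (hf a (Finset.mem_insert_self a s)) hrest,
      ih fun k hk => hf k (Finset.mem_insert_of_mem hk)]

/-- The reflection step of Lévy's inequality: a median-zero `Z` independent of `(A, S)` does not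
pull `S` back towards `0` with probability at least `1 / 2`. -/
theorem measure_le_two_mul_measure_inter_of_indep {m₁ m₂ : MeasurableSpace Ω} (hm₁ : m₁ ≤ mΩ)
    (hm₂ : m₂ ≤ mΩ) (hind : Indep m₁ m₂ μ) {A : Set Ω} (hA : MeasurableSet[m₁] A)
    {S Z : Ω → ℝ} (hS : Measurable[m₁] S) (hZ : Measurable[m₂] Z)
    (hZpos : 1 / 2 ≤ μ {ω | 0 ≤ Z ω}) (hZneg : 1 / 2 ≤ μ {ω | Z ω ≤ 0}) {x : ℝ}
    (hAx : ∀ ω ∈ A, x < |S ω|) :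
    μ A ≤ 2 * μ (A ∩ {ω | x ≤ |S ω + Z ω|}) := by
  have half : ∀ {B C : Set Ω}, MeasurableSet[m₁] B → MeasurableSet[m₂] C → 1 / 2 ≤ μ C →
      μ B ≤ 2 * μ (B ∩ C) := by
    intro B C hB hC hhalf
    rw [(Indep_iff _ _ _).1 hind B C hB hC]
    calc μ B = 2 * (μ B * 2⁻¹) := by
          rw [mul_comm (μ B), ← mul_assoc, ENNReal.mul_inv_cancel two_ne_zero ENNReal.ofNat_ne_top,
            one_mul]
      _ ≤ 2 * (μ B * μ C) := by rw [← one_div]; gcongr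
  set Apos := A ∩ {ω | 0 ≤ S ω}
  set Aneg := A ∩ {ω | S ω < 0}
  set Zpos := {ω | 0 ≤ Z ω}
  set Zneg := {ω | Z ω ≤ 0}
  have hApos : MeasurableSet[m₁] Apos := hA.inter (measurableSet_le measurable_const hS)
  have hAneg : MeasurableSet[m₁] Aneg := hA.inter (measurableSet_lt hS measurable_const)
  have hZposm : MeasurableSet[m₂] Zpos := measurableSet_le measurable_const hZ
  have hZnegm : MeasurableSet[m₂] Zneg := measurableSet_le hZ measurable_const
  have hdisj : Disjoint (Apos ∩ Zpos) (Aneg ∩ Zneg) :=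
    disjoint_left.2 fun ω hpos hneg => by
      have h₁ : 0 ≤ S ω := hpos.1.2
      have h₂ : S ω < 0 := hneg.1.2
      linarith
  have hsub : Apos ∩ Zpos ∪ Aneg ∩ Zneg ⊆ A ∩ {ω | x ≤ |S ω + Z ω|} := by
    rintro ω (⟨⟨hω, hSω⟩, hZω⟩ | ⟨⟨hω, hSω⟩, hZω⟩) <;> refine ⟨hω, ?_⟩ <;> have hx := hAx ω hω
    · have hS₀ : 0 ≤ S ω := hSω
      have hZ₀ : 0 ≤ Z ω := hZω
      rw [abs_of_nonneg hS₀] at hx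
      exact (hx.le.trans (by linarith)).trans (le_abs_self _)
    · have hS₀ : S ω < 0 := hSω
      have hZ₀ : Z ω ≤ 0 := hZω
      rw [abs_of_neg hS₀] at hx
      exact (hx.le.trans (by linarith)).trans (neg_le_abs _)
  calc μ A ≤ μ Apos + μ Aneg := by
        refine (measure_mono fun ω hω => ?_).trans (measure_union_le Apos Aneg)
        rcases le_or_gt 0 (S ω) with h | h
        exacts [Or.inl ⟨hω, h⟩, Or.inr ⟨hω, h⟩]
    _ ≤ 2 * μ (Apos ∩ Zpos) + 2 * μ (Aneg ∩ Zneg) :=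
        add_le_add (half hApos hZposm hZpos) (half hAneg hZnegm hZneg)
    _ = 2 * μ (Apos ∩ Zpos ∪ Aneg ∩ Zneg) := by
        rw [measure_union hdisj ((hm₁ _ hAneg).inter (hm₂ _ hZnegm)), mul_add]
    _ ≤ 2 * μ (A ∩ {ω | x ≤ |S ω + Z ω|}) := by gcongr

abbrev incrementSigma (Y : ℕ → Ω → ℝ) (S : Set ℕ) : MeasurableSpace Ω :=
  ⨆ l ∈ S, MeasurableSpace.comap (fun ω => Y (l + 1) ω - Y l ω) inferInstance

theorem incrementSigma_le {Y : ℕ → Ω → ℝ} (hY : ∀ l, Measurable (Y l)) (S : Set ℕ) :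
    incrementSigma Y S ≤ mΩ :=
  iSup₂_le fun l _ => ((hY (l + 1)).sub (hY l)).comap_le

theorem measurable_sub_incrementSigma (Y : ℕ → Ω → ℝ) {S : Set ℕ} {a b : ℕ} (hab : a ≤ b)
    (hS : ∀ l, a ≤ l → l < b → l ∈ S) :
    Measurable[incrementSigma Y S] fun ω => Y b ω - Y a ω := by
  have hsum : (fun ω => Y b ω - Y a ω) = fun ω => ∑ l ∈ Finset.Ico a b, (Y (l + 1) ω - Y l ω) :=
    funext fun ω => (Finset.sum_Ico_sub (fun l => Y l ω) hab).symm
  rw [hsum]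
  refine Finset.measurable_fun_sum _ fun l hl => ?_
  rw [Finset.mem_Ico] at hl
  exact (comap_measurable _).mono
    (le_iSup₂ (f := fun l (_ : l ∈ S) => MeasurableSpace.comap
      (fun ω => Y (l + 1) ω - Y l ω) inferInstance) l (hS l hl.1 hl.2)) le_rfl

theorem measure_exists_abs_sub_gt_le {Y : ℕ → Ω → ℝ} (hY : ∀ l, Measurable (Y l))
    (hind : iIndepFun (fun l ω => Y (l + 1) ω - Y l ω) μ) {N : ℕ}
    (hmed : ∀ k ≤ N, 1 / 2 ≤ μ {ω | Y k ω ≤ Y N ω} ∧ 1 / 2 ≤ μ {ω | Y N ω ≤ Y k ω}) (x : ℝ) :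
    μ {ω | ∃ k ≤ N, x < |Y k ω - Y 0 ω|} ≤ 2 * μ {ω | x ≤ |Y N ω - Y 0 ω|} := by
  classical
  set S : ℕ → Ω → ℝ := fun k ω => Y k ω - Y 0 ω
  -- Decompose by the first time at which `|S|` exceeds `x`.
  set A : ℕ → Set Ω := fun k => {ω | x < |S k ω|} ∩ ⋂ j ∈ Finset.range k, {ω | |S j ω| ≤ x}
  have hAmeas : ∀ k, MeasurableSet[incrementSigma Y (Iio k)] (A k) := by
    intro k
    have hS : ∀ j ≤ k, Measurable[incrementSigma Y (Iio k)] (S j) := fun j hj =>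
      measurable_sub_incrementSigma Y (Nat.zero_le j) fun l _ hl => (hl.trans_le hj : l < k)
    exact ((measurable_abs.comp (hS k le_rfl)) measurableSet_Ioi).inter
      (Finset.measurableSet_biInter _ fun j hj =>
        (measurable_abs.comp (hS j (Finset.mem_range.1 hj).le)) measurableSet_Iic)
  have hdisj : (↑(Finset.range (N + 1)) : Set ℕ).PairwiseDisjoint A := by
    have key : ∀ j k, j < k → Disjoint (A j) (A k) := fun j k hjk =>
      disjoint_left.2 fun ω hj hk => by
        have h₁ : x < |S j ω| := hj.1
        have h₂ : |S j ω| ≤ x := mem_iInter₂.1 hk.2 j (Finset.mem_range.2 hjk)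
        linarith
    intro j _ k _ hjk
    rcases lt_or_gt_of_ne hjk with h | h
    exacts [key j k h, (key k j h).symm]
  have hcover : {ω | ∃ k ≤ N, x < |S k ω|} = ⋃ k ∈ Finset.range (N + 1), A k := by
    ext ω
    simp only [mem_ofPred_eq, mem_iUnion, Finset.mem_range, A, mem_inter_iff, mem_iInter,
      exists_prop]
    constructor
    · rintro ⟨k, hk, hxk⟩
      have hex : ∃ k, x < |S k ω| := ⟨k, hxk⟩
      refine ⟨Nat.find hex, by linarith [Nat.find_min' hex hxk], Nat.find_spec hex,
        fun j hj => not_lt.1 (Nat.find_min hex hj)⟩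
    · rintro ⟨k, hk, hxk, -⟩
      exact ⟨k, Nat.lt_succ_iff.1 hk, hxk⟩
  have hstep : ∀ k ≤ N, μ (A k) ≤ 2 * μ (A k ∩ {ω | x ≤ |S N ω|}) := by
    intro k hk
    have hindk : Indep (incrementSigma Y (Iio k)) (incrementSigma Y (Ici k)) μ :=
      indep_iSup_of_disjoint (fun l => ((hY (l + 1)).sub (hY l)).comap_le) hind.iIndep
        (Iio_disjoint_Ici le_rfl)
    have := measure_le_two_mul_measure_inter_of_indep (incrementSigma_le hY _)
      (incrementSigma_le hY _) hindk (hAmeas k)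
      (measurable_sub_incrementSigma Y (Nat.zero_le k) fun l _ hl => (hl : l < k))
      (measurable_sub_incrementSigma Y hk fun l hl _ => (hl : k ≤ l))
      (by simpa only [sub_nonneg] using (hmed k hk).1)
      (by simpa only [sub_nonpos] using (hmed k hk).2) fun ω hω => hω.1
    simpa only [S, sub_add_sub_cancel'] using this
  calc μ {ω | ∃ k ≤ N, x < |S k ω|} = ∑ k ∈ Finset.range (N + 1), μ (A k) := by
        rw [hcover, measure_biUnion_finset hdisj fun k _ => incrementSigma_le hY _ _ (hAmeas k)]
    _ ≤ ∑ k ∈ Finset.range (N + 1), 2 * μ (A k ∩ {ω | x ≤ |S N ω|}) :=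
        Finset.sum_le_sum fun k hk => hstep k (Nat.lt_succ_iff.1 (Finset.mem_range.1 hk))
    _ = 2 * μ (⋃ k ∈ Finset.range (N + 1), A k ∩ {ω | x ≤ |S N ω|}) := by
        rw [← Finset.mul_sum]
        congr 1
        exact (measure_biUnion_finset (hdisj.mono fun k => inter_subset_left) fun k _ =>
          (incrementSigma_le hY _ _ (hAmeas k)).inter
            (((hY N).sub (hY 0)).abs measurableSet_Ici)).symm
    _ ≤ 2 * μ {ω | x ≤ |S N ω|} := by
        gcongr
        exact iUnion₂_subset fun k _ => inter_subset_right

end Independence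

variable {Ω : Type*}

def blockEvent (B : ℝ → Ω → ℝ) (a h r d η : ℝ) : Set Ω :=
  {ω | (∀ u ∈ Icc a (a + h), |B u ω - B a ω| ≤ r) ∧ |B (a + h) ω - B a ω - d| ≤ η}

def dyadicBlockEvent (B : ℝ → Ω → ℝ) (a h r d η : ℝ) (K : ℕ) : Set Ω :=
  {ω | (∀ k : ℕ, k ≤ 2 ^ K → |B (a + k * (h / 2 ^ K)) ω - B a ω| ≤ r) ∧
    |B (a + h) ω - B a ω - d| ≤ η}

theorem iInter_dyadicBlockEvent {B : ℝ → Ω → ℝ} (hB : ∀ ω, Continuous fun t => B t ω)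
    {a h : ℝ} (hh : 0 < h) (r d η : ℝ) :
    ⋂ K, dyadicBlockEvent B a h r d η K = blockEvent B a h r d η := by
  ext ω
  have hdy := forall_mem_Icc_iff_forall_dyadic (g := fun u => B u ω - B a ω)
    ((hB ω).sub continuous_const) (isClosed_le continuous_abs continuous_const)
    (C := {y | |y| ≤ r}) (a := a) hh
  simp only [mem_ofPred_eq] at hdy
  simp only [mem_iInter, blockEvent, dyadicBlockEvent, mem_ofPred_eq, hdy, forall_and,
    forall_const]

theorem antitone_dyadicBlockEvent (B : ℝ → Ω → ℝ) (a h r d η : ℝ) :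
    Antitone (dyadicBlockEvent B a h r d η) :=
  antitone_nat_of_succ_le fun K ω hω =>
    ⟨fun k hk => by
      rw [dyadic_eq_succ]
      exact hω.1 (2 * k) (by rw [pow_succ]; omega), hω.2⟩

theorem measurableSet_dyadicBlockEvent (B : ℝ → Ω → ℝ) (j K : ℕ) (h r d η : ℝ) :
    MeasurableSet[incrementSigma (fun l => B (l * (h / 2 ^ K)))
      (Ico (j * 2 ^ K) (j * 2 ^ K + 2 ^ K))] (dyadicBlockEvent B (j * h) h r d η K) := by
  set Y : ℕ → Ω → ℝ := fun l => B (l * (h / 2 ^ K))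
  set M := 2 ^ K
  have hstart : (j : ℝ) * h = ((j * M : ℕ) : ℝ) * (h / 2 ^ K) := by
    push_cast [M]
    field_simp
  have hpt : ∀ k : ℕ, ((j * M : ℕ) : ℝ) * (h / 2 ^ K) + k * (h / 2 ^ K) =
      ((j * M + k : ℕ) : ℝ) * (h / 2 ^ K) := fun k => by push_cast; ring
  have hend : ((j * M : ℕ) : ℝ) * (h / 2 ^ K) + h = ((j * M + M : ℕ) : ℝ) * (h / 2 ^ K) := by
    push_cast [M]
    field_simp
  have hm : ∀ k ≤ M, Measurable[incrementSigma Y (Ico (j * M) (j * M + M))]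
      fun ω => Y (j * M + k) ω - Y (j * M) ω :=
    fun k hk => measurable_sub_incrementSigma Y (Nat.le_add_right _ _)
      fun l hl hl' => ⟨hl, by omega⟩
  have hset : dyadicBlockEvent B (j * h) h r d η K =
      (⋂ k ∈ Finset.range (M + 1),
        (fun ω => |Y (j * M + k) ω - Y (j * M) ω|) ⁻¹' Iic r) ∩
      (fun ω => |Y (j * M + M) ω - Y (j * M) ω - d|) ⁻¹' Iic η := by
    ext ω
    simp only [dyadicBlockEvent, hstart, hpt, hend, mem_ofPred_eq, mem_inter_iff, mem_iInter₂,
      Finset.mem_range, Nat.lt_succ_iff, mem_preimage, mem_Iic, Y]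
    rfl
  rw [hset]
  have hk : ∀ k ∈ Finset.range (M + 1), k ≤ M := fun k hk =>
    Nat.lt_succ_iff.1 (Finset.mem_range.1 hk)
  exact (Finset.measurableSet_biInter _ fun k hk' =>
      (measurable_abs.comp (hm k (hk k hk'))) measurableSet_Iic).inter
    ((measurable_abs.comp ((hm M le_rfl).sub_const d)) measurableSet_Iic)

end BrownianSupport

open BrownianSupport

namespace IsBrownianMotion

variable {Ω : Type*} [MeasurableSpace Ω] {P : Measure Ω} {B : ℝ → Ω → ℝ}

theorem measure_sub_mem (hB : IsBrownianMotion P B) {s t : ℝ} (hs : 0 ≤ s) (hst : s ≤ t)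
    {S : Set ℝ} (hS : MeasurableSet S) :
    P {ω | B t ω - B s ω ∈ S} = gaussianReal 0 (t - s).toNNReal S := by
  have hm : Measurable fun ω => B t ω - B s ω := (hB.measurable t).sub (hB.measurable s)
  rw [← hB.gaussian_increments s t hs hst, Measure.map_apply hm hS]
  rfl

theorem half_le_measure_le (hB : IsBrownianMotion P B) {s t : ℝ} (hs : 0 ≤ s) (hst : s ≤ t) :
    1 / 2 ≤ P {ω | B s ω ≤ B t ω} ∧ 1 / 2 ≤ P {ω | B t ω ≤ B s ω} := by
  have hpos := hB.measure_sub_mem hs hst (measurableSet_Ici (a := 0))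
  have hneg := hB.measure_sub_mem hs hst (measurableSet_Iic (a := 0))
  simp only [mem_Ici, mem_Iic, sub_nonneg, sub_nonpos] at hpos hneg
  rw [hpos, hneg, gaussianReal_Iic_zero_eq_Ici_zero]
  exact ⟨half_le_gaussianReal_Ici_zero _, half_le_gaussianReal_Ici_zero _⟩

theorem iIndepFun_increments (hB : IsBrownianMotion P B) {τ : ℕ → ℝ} (hτ : Monotone τ)
    (hτ₀ : ∀ i, 0 ≤ τ i) : iIndepFun (fun i ω => B (τ (i + 1)) ω - B (τ i) ω) P := by
  rw [iIndepFun_iff_finset]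
  intro s
  obtain ⟨n, hn⟩ : ∃ n, ∀ i ∈ s, i < n :=
    ⟨s.sup id + 1, fun i hi => Nat.lt_succ_of_le (Finset.le_sup (f := id) hi)⟩
  exact (hB.indep_increments n τ hτ hτ₀).precomp (g := fun i : s => (⟨i, hn i i.2⟩ : Fin n))
    fun i j hij => Subtype.ext (congrArg Fin.val hij)

theorem measure_exists_abs_sub_gt_le (hB : IsBrownianMotion P B) {s h : ℝ} (hs : 0 ≤ s)
    (hh : 0 < h) (x : ℝ) :
    P {ω | ∃ u ∈ Icc s (s + h), x < |B u ω - B s ω|} ≤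
      2 * gaussianReal 0 h.toNNReal {y | x ≤ |y|} := by
  set E : ℕ → Set Ω := fun K => {ω | ∃ k : ℕ, k ≤ 2 ^ K ∧ x < |B (s + k * (h / 2 ^ K)) ω - B s ω|}
  have hunion : {ω | ∃ u ∈ Icc s (s + h), x < |B u ω - B s ω|} = ⋃ K, E K := by
    ext ω
    have hdy := forall_mem_Icc_iff_forall_dyadic (g := fun u => B u ω - B s ω)
      ((hB.continuous_paths ω).sub continuous_const)
      (isClosed_le continuous_abs continuous_const) (C := {y | |y| ≤ x}) (a := s) hh
    simp only [mem_ofPred_eq, mem_iUnion, E] at hdy ⊢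
    simpa only [not_le, not_forall, Classical.not_imp, exists_prop] using hdy.not
  have hmono : Monotone E := monotone_nat_of_le_succ fun K ω ⟨k, hk, hx⟩ =>
    ⟨2 * k, by rw [pow_succ]; omega, by rwa [← dyadic_eq_succ]⟩
  have hlevel : ∀ K, P (E K) ≤ 2 * gaussianReal 0 h.toNNReal {y | x ≤ |y|} := by
    intro K
    have hτ : Monotone fun k : ℕ => s + k * (h / 2 ^ K) := fun i j hij => by
      have : (i : ℝ) ≤ j := by exact_mod_cast hij
      dsimp only
      gcongr
    have hend : s + ((2 ^ K : ℕ) : ℝ) * (h / 2 ^ K) = s + h := by push_cast; field_simp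
    have hlevy := BrownianSupport.measure_exists_abs_sub_gt_le (μ := P)
      (Y := fun k => B (s + k * (h / 2 ^ K))) (fun k => hB.measurable _)
      (hB.iIndepFun_increments hτ fun k => by positivity) (N := 2 ^ K)
      (fun k hk => hB.half_le_measure_le (by positivity) (hτ hk)) x
    have hlaw := hB.measure_sub_mem hs (le_add_of_nonneg_right hh.le) (S := {y | x ≤ |y|})
      (measurableSet_le measurable_const measurable_abs)
    simp only [Nat.cast_zero, zero_mul, add_zero, hend] at hlevy
    simp only [mem_ofPred_eq, add_sub_cancel_left] at hlaw
    rwa [hlaw] at hlevy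
  rw [hunion, hmono.measure_iUnion]
  exact iSup_le hlevel

theorem gaussianReal_le_measure_blockEvent_add (hB : IsBrownianMotion P B) {a h : ℝ} (ha : 0 ≤ a)
    (hh : 0 < h) (r d η : ℝ) :
    gaussianReal 0 h.toNNReal {y | |y - d| ≤ η} ≤
      P (blockEvent B a h r d η) + 2 * gaussianReal 0 h.toNNReal {y | r ≤ |y|} := by
  have hlaw := hB.measure_sub_mem ha (le_add_of_nonneg_right hh.le) (S := {y | |y - d| ≤ η})
    (measurableSet_le (measurable_id.sub_const d).abs measurable_const)
  simp only [mem_ofPred_eq, add_sub_cancel_left] at hlaw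
  rw [← hlaw]
  calc P {ω | |B (a + h) ω - B a ω - d| ≤ η}
      ≤ P (blockEvent B a h r d η ∪ {ω | ∃ u ∈ Icc a (a + h), r < |B u ω - B a ω|}) := by
        refine measure_mono fun ω hω => ?_
        by_cases hosc : ∀ u ∈ Icc a (a + h), |B u ω - B a ω| ≤ r
        · exact Or.inl ⟨hosc, hω⟩
        · push Not at hosc
          exact Or.inr hosc
    _ ≤ P (blockEvent B a h r d η) + P {ω | ∃ u ∈ Icc a (a + h), r < |B u ω - B a ω|} :=
        measure_union_le _ _
    _ ≤ P (blockEvent B a h r d η) + 2 * gaussianReal 0 h.toNNReal {y | r ≤ |y|} := by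
        gcongr
        exact hB.measure_exists_abs_sub_gt_le ha hh r

theorem exists_forall_measure_blockEvent_pos (hB : IsBrownianMotion P B) (L : ℝ) {η r : ℝ}
    (hη : 0 < η) (hr : 0 < r) :
    ∃ h₀ > 0, ∀ h, 0 < h → h < h₀ → ∀ a, 0 ≤ a → ∀ d, |d| ≤ L * h →
      0 < P (blockEvent B a h r d (η * h)) := by
  -- The window probability is at least `2 η h e^(-q) / √(2πh)`, which beats the tail bound
  -- `2 h / r ^ 2` as soon as `√(2πh) < c`.
  set q := (L + η) ^ 2 / 2
  set c := η * r ^ 2 * Real.exp (-q)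
  have hc : 0 < c := by positivity
  refine ⟨min 1 (c ^ 2 / (2 * Real.pi)), by positivity, fun h hh hh₀ a ha d hd => ?_⟩
  have hh₁ : h ≤ 1 := (hh₀.trans_le (min_le_left _ _)).le
  have hsqrt : Real.sqrt (2 * Real.pi * h) < c := by
    have : 2 * Real.pi * h < c ^ 2 := by
      have := hh₀.trans_le (min_le_right _ _)
      rw [lt_div_iff₀ (by positivity)] at this
      linarith
    simpa [Real.sqrt_sq hc.le] using Real.sqrt_lt_sqrt (by positivity) this
  have hexp : Real.exp (-q) ≤ Real.exp (-(|d| + η * h - 0) ^ 2 / (2 * h)) := by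
    gcongr
    rw [sub_zero, le_div_iff₀ (by positivity)]
    have hsq : (|d| + η * h) ^ 2 ≤ ((L + η) * h) ^ 2 :=
      pow_le_pow_left₀ (by positivity) (by linarith) 2
    have hh2 : ((L + η) * h) ^ 2 ≤ (L + η) ^ 2 * h := by
      rw [mul_pow]
      exact mul_le_mul_of_nonneg_left (by nlinarith) (sq_nonneg _)
    simp only [q]
    linarith
  have key : 2 * (h / r ^ 2) <
      2 * (η * h) * gaussianPDFReal 0 h.toNNReal (|d| + η * h) := by
    rw [gaussianPDFReal, Real.coe_toNNReal _ hh.le]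
    calc 2 * (h / r ^ 2) = 2 * (η * h) * (c⁻¹ * Real.exp (-q)) := by
          field_simp
          simp only [c]
          ring
      _ < 2 * (η * h) * ((Real.sqrt (2 * Real.pi * h))⁻¹ * Real.exp (-q)) := by
          gcongr
      _ ≤ _ := by gcongr
  rw [pos_iff_ne_zero]
  intro hzero
  have hbound := (ofReal_le_gaussianReal_abs_sub_le (Real.toNNReal_pos.2 hh).ne' d (η * h)).trans
    (hB.gaussianReal_le_measure_blockEvent_add ha hh r d (η * h))
  rw [hzero, zero_add] at hbound
  have htail := gaussianReal_le_abs_le_div_sq h.toNNReal hr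
  rw [Real.coe_toNNReal _ hh.le] at htail
  have := hbound.trans (mul_le_mul_right htail 2)
  rw [← ENNReal.ofReal_ofNat, ← ENNReal.ofReal_mul zero_le_two,
    ENNReal.ofReal_le_ofReal_iff (by positivity)] at this
  linarith

theorem prod_measure_blockEvent_le (hB : IsBrownianMotion P B) {h : ℝ} (hh : 0 < h)
    (s : Finset ℕ) (r d η : ℕ → ℝ) :
    ∏ j ∈ s, P (blockEvent B (j * h) h (r j) (d j) (η j)) ≤
      P (⋂ j ∈ s, blockEvent B (j * h) h (r j) (d j) (η j)) := by
  have := hB.isProbability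
  set E : ℕ → ℕ → Set Ω := fun K j => dyadicBlockEvent B (j * h) h (r j) (d j) (η j) K
  have hσ : ∀ K j, MeasurableSet (E K j) := fun K j =>
    incrementSigma_le (fun l => hB.measurable _) _ _ (measurableSet_dyadicBlockEvent B j K h _ _ _)
  have hlevel : ∀ K, P (⋂ j ∈ s, E K j) = ∏ j ∈ s, P (E K j) := by
    intro K
    have hτ : Monotone fun l : ℕ => l * (h / 2 ^ K) := fun i j hij => by
      have : (i : ℝ) ≤ j := by exact_mod_cast hij
      dsimp only
      gcongr
    have hdisj : Pairwise (Function.onFun Disjoint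
        fun j : ℕ => Ico (j * 2 ^ K) (j * 2 ^ K + 2 ^ K)) := by
      intro i j hij
      refine disjoint_left.2 fun l hi hj => hij ?_
      rw [← Nat.div_eq_of_lt_le hi.1 (by linarith [hi.2]), ← Nat.div_eq_of_lt_le hj.1
        (by linarith [hj.2])]
    exact (iIndep_biSup_of_pairwise_disjoint (fun l => ((hB.measurable _).sub
      (hB.measurable _)).comap_le) (hB.iIndepFun_increments hτ fun l => by positivity).iIndep
      hdisj).meas_biInter fun j _ => measurableSet_dyadicBlockEvent B j K h _ _ _
  have hlim : ⋂ j ∈ s, blockEvent B (j * h) h (r j) (d j) (η j) = ⋂ K, ⋂ j ∈ s, E K j := by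
    simp only [E, ← iInter_dyadicBlockEvent hB.continuous_paths hh]
    rw [iInter_comm]
    simp only [iInter_comm (ι := ℕ)]
  rw [hlim, Antitone.measure_iInter (fun K K' hKK' => iInter₂_mono fun j _ =>
      antitone_dyadicBlockEvent B _ h _ _ _ hKK')
    (fun K => (Finset.measurableSet_biInter s fun j _ => hσ K j).nullMeasurableSet)
    ⟨0, measure_ne_top _ _⟩]
  refine le_iInf fun K => (hlevel K).symm ▸ Finset.prod_le_prod' fun j _ => measure_mono ?_
  rw [← iInter_dyadicBlockEvent hB.continuous_paths hh]
  exact iInter_subset _ K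

end IsBrownianMotion

/-- Support theorem for Brownian motion: for any continuous `f : [0,1] → ℝ`
with `f(0) = 0` and any `ε > 0`, with positive probability the Brownian path
stays uniformly `ε`-close to `f` on `[0,1]`. -/
theorem brownian_support_theorem {Ω : Type*} [MeasurableSpace Ω]
    (P : Measure Ω) (B : ℝ → Ω → ℝ) (hB : IsBrownianMotion P B)
    (f : ℝ → ℝ) (hf : ContinuousOn f (Set.Icc 0 1)) (hf0 : f 0 = 0)
    (ε : ℝ) (hε : 0 < ε) :
    0 < P {ω | ∀ t ∈ Set.Icc (0 : ℝ) 1, |B t ω - f t| < ε} := by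
  obtain ⟨g, L, hgL, hg0, hgf⟩ := exists_lipschitzOnWith_abs_sub_lt hf (ε := ε / 4) (by positivity)
  obtain ⟨h₀, hh₀, hpos⟩ := hB.exists_forall_measure_blockEvent_pos L
    (η := ε / 4) (r := ε / 4) (by positivity) (by positivity)
  obtain ⟨N, hN, hNh₀, hNL⟩ : ∃ N : ℕ, 0 < N ∧ 1 / (N : ℝ) < h₀ ∧ L * (1 / (N : ℝ)) ≤ ε / 4 :=
    ((eventually_gt_atTop 0).and ((tendsto_one_div_atTop_nhds_zero_nat.eventually
      (gt_mem_nhds hh₀)).and ((tendsto_one_div_atTop_nhds_zero_nat.const_mul (L : ℝ)).eventually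
        (ge_mem_nhds (by rw [mul_zero]; positivity))))).exists
  set h : ℝ := 1 / N
  have hh : 0 < h := by positivity
  have hNh : (N : ℝ) * h = 1 := mul_one_div_cancel (by positivity)
  have hgblock : ∀ j < N, ∀ u ∈ Icc (j * h) (j * h + h), |g u - g (j * h)| ≤ L * h :=
    fun j hj u hu => abs_sub_le_of_mem_block (by rwa [hNh]) hh hj hu
  refine (CanonicallyOrderedAdd.prod_pos.2 fun j hj => hpos h hh hNh₀ _ (by positivity) _
      (hgblock j (Finset.mem_range.1 hj) _ ⟨by linarith, le_rfl⟩)).trans_le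
    ((hB.prod_measure_blockEvent_le hh (Finset.range N) (fun _ => ε / 4)
      (fun j => g (j * h + h) - g (j * h)) (fun _ => ε / 4 * h)).trans
        (measure_mono fun ω hω t ht => ?_))
  simp only [mem_iInter₂, Finset.mem_range] at hω
  have htube := abs_sub_le_of_blocks (φ := fun u => B u ω) hh hN (by rw [hB.start, hg0, hf0])
    (fun j hj => (hω j hj).1) hgblock (fun j hj => (hω j hj).2) t (by rwa [hNh])
  have hNη : (N : ℝ) * (ε / 4 * h) = ε / 4 := by rw [mul_left_comm, hNh, mul_one]
  calc |B t ω - f t| ≤ |B t ω - g t| + |g t - f t| := abs_sub_le _ _ _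
    _ < ε := by linarith [hgf t ht]
end

section
/- Let (B_t)_{t ≥ 0} be a standard one-dimensional Brownian motion and define M(t) := ∫_0^t cos(π(t − s)) B_s ds. Then for every L > 0, with positive probability one has M(t) ≥ L for all t ∈ [1/16, 3/16]; that is, P( ∀ t ∈ [1/16, 3/16], M(t) ≥ L ) > 0. -/
/-!
Put `K = 64 L + 2`. For `t ∈ [1/16, 3/16]` the kernel `cos (π (t - s))` lies in `[1/2, 1]` on
`[0, t]`, so any continuous path that stays `≥ -1` on `[0, 3/16]` and `≥ K` on `[1/32, 3/16]` has
`∫₀ᵗ cos (π (t - s)) B s ds ≥ -1/32 + K/64 = L`. It remains to see that Brownian motion follows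
such a staircase with positive probability.

Cut `[0, 3/16]` into `6N` blocks of length `1/(32N)`, each split into `M` steps. On block `k` ask
that `B` rise by at least `(K + 1)/N` across the block, which has probability at least
`p = P(Z ≥ 1)` (`Z` standard Gaussian) once `N ≥ 32 (K + 1)²`, and that at the step points `B`
does not fall more than `1/2` below its value at the left end of the block. By uniform continuity
of the paths, the second condition fails with probability at most `p/2` when `N` is large, so each
block event has probability at least `p/2`. The block events depend on disjoint groups of
increments, so they are independent and all of them occur with probability at least `(p/2)^(6N)`.
With `N` now fixed, take `M` so large that the path oscillates by more than `1/2` within one step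
with probability less than `(p/2)^(6N)`; off that event the path stays above `k (K + 1)/N - 1` on
block `k`.
-/

open MeasureTheory ProbabilityTheory

open Set

lemma Continuous.le_of_forall_rat_mem_Icc {f : ℝ → ℝ} (hf : Continuous f) {a b v : ℝ}
    (hab : a < b) (h : ∀ r : ℚ, (r : ℝ) ∈ Icc a b → v ≤ f r) : ∀ s ∈ Icc a b, v ≤ f s := by
  have hclosed : IsClosed {s | v ≤ f s} := isClosed_le continuous_const hf
  have hsub : Ioo a b ∩ range ((↑) : ℚ → ℝ) ⊆ {s | v ≤ f s} := by
    rintro _ ⟨hs, r, rfl⟩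
    exact h r (Ioo_subset_Icc_self hs)
  rw [← closure_Ioo hab.ne]
  exact closure_minimal ((Rat.denseRange_cast.open_subset_closure_inter isOpen_Ioo).trans
    (closure_minimal hsub hclosed)) hclosed

lemma half_le_cos_pi_mul {x : ℝ} (hx₀ : 0 ≤ x) (hx : x ≤ 1 / 3) :
    1 / 2 ≤ Real.cos (Real.pi * x) := by
  rw [← Real.cos_pi_div_three]
  apply Real.cos_le_cos_of_nonneg_of_le_pi (by positivity) (by linarith [Real.pi_pos])
  nlinarith [Real.pi_pos]

lemma le_integral_cos_mul {g : ℝ → ℝ} (hg : Continuous g) {K t : ℝ} (hK : 0 ≤ K)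
    (hlow : ∀ s ∈ Icc (0 : ℝ) (3 / 16), -1 ≤ g s)
    (hhigh : ∀ s ∈ Icc (1 / 32 : ℝ) (3 / 16), K ≤ g s) (ht : t ∈ Icc (1 / 16 : ℝ) (3 / 16)) :
    (K - 2) / 64 ≤ ∫ s in (0 : ℝ)..t, Real.cos (Real.pi * (t - s)) * g s := by
  obtain ⟨ht₁, ht₂⟩ := ht
  set f := fun s => Real.cos (Real.pi * (t - s)) * g s
  have hf : ∀ a b, IntervalIntegrable f volume a b := fun a b =>
    ((by fun_prop : Continuous fun s => Real.cos (Real.pi * (t - s))).mul hg).intervalIntegrable a b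
  have hcos : ∀ s ∈ Icc 0 t, 1 / 2 ≤ Real.cos (Real.pi * (t - s)) := fun s hs =>
    half_le_cos_pi_mul (by linarith [hs.2]) (by linarith [hs.1])
  have hinit : -(1 / 32) ≤ ∫ s in (0 : ℝ)..1 / 32, f s := by
    have := intervalIntegral.integral_mono_on (by norm_num) intervalIntegrable_const (hf 0 (1 / 32))
      fun s ⟨hs₀, hs₁⟩ => show (-1 : ℝ) ≤ f s by
        have := hcos s ⟨hs₀, by linarith⟩
        have := hlow s ⟨hs₀, by linarith⟩
        rcases le_total 0 (g s) with h | h <;> nlinarith [Real.cos_le_one (Real.pi * (t - s))]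
    simpa using this
  have hmain : K / 64 ≤ ∫ s in (1 / 32 : ℝ)..t, f s := by
    have := intervalIntegral.integral_mono_on (by linarith) intervalIntegrable_const (hf (1 / 32) t)
      fun s ⟨hs₀, hs₁⟩ => show K / 2 ≤ f s by
        have := hcos s ⟨by linarith, hs₁⟩
        have := hhigh s ⟨hs₀, by linarith⟩
        nlinarith
    simp only [intervalIntegral.integral_const, smul_eq_mul] at this
    nlinarith
  rw [← intervalIntegral.integral_add_adjacent_intervals (hf 0 (1 / 32)) (hf (1 / 32) t)]
  linarith

section Staircase

variable {f : ℝ → ℝ} {τ : ℕ → ℝ} {M m : ℕ} {c : ℝ}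

lemma Monotone.exists_mem_Ico_mem_Icc {T : ℕ → ℝ} (hT : Monotone T) {a b : ℕ} (hab : a < b)
    {s : ℝ} (hs : s ∈ Icc (T a) (T b)) : ∃ i ∈ Ico a b, s ∈ Icc (T i) (T (i + 1)) := by
  rcases hs.1.eq_or_lt with rfl | hlt
  · exact ⟨a, ⟨le_rfl, hab⟩, le_rfl, hT a.le_succ⟩
  · have : s ∈ ⋃ i ∈ Ico a b, Ioc (T i) (T (Order.succ i)) := by
      rw [hT.biUnion_Ico_Ioc_map_succ]
      exact ⟨hlt, hs.2⟩
    obtain ⟨i, hi, hs'⟩ := mem_iUnion₂.1 this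
    exact ⟨i, hi, Ioc_subset_Icc_self hs'⟩

lemma add_mul_le_of_forall_le_sub (hclimb : ∀ k < m, c ≤ f (τ (M * k + M)) - f (τ (M * k))) :
    ∀ k ≤ m, f (τ 0) + k * c ≤ f (τ (M * k)) := by
  intro k hk
  induction k with
  | zero => simp
  | succ k ih =>
    rw [Nat.mul_succ]
    push_cast
    linarith [ih (by omega), hclimb k hk]

lemma le_of_mem_Icc_block (hf : Continuous f) (hτ : StrictMono τ) (hM : 0 < M)
    (hclimb : ∀ k < m, c ≤ f (τ (M * k + M)) - f (τ (M * k)))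
    (hdrop : ∀ k < m, ∀ j ≤ M, -(1 / 2) ≤ f (τ (M * k + j)) - f (τ (M * k)))
    (hfine : ∀ i < M * m, ∀ r : ℚ, (r : ℝ) ∈ Icc (τ i) (τ (i + 1)) → -(1 / 2) ≤ f r - f (τ i))
    {k : ℕ} (hk : k < m) : ∀ s ∈ Icc (τ (M * k)) (τ (M * k + M)), f (τ 0) + k * c - 1 ≤ f s := by
  intro s hs
  obtain ⟨i, ⟨hki, hik⟩, hsi⟩ := hτ.monotone.exists_mem_Ico_mem_Icc (by omega) hs
  have hgrid := add_mul_le_of_forall_le_sub hclimb k hk.le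
  have hblock := hdrop k hk (i - M * k) (by omega)
  rw [Nat.add_sub_cancel' hki] at hblock
  have hi : i < M * m := hik.trans_le (by rw [← Nat.mul_succ]; exact Nat.mul_le_mul_left M hk)
  refine hf.le_of_forall_rat_mem_Icc (hτ i.lt_succ_self) (fun r hr => ?_) s hsi
  linarith [hfine i hi r hr]

lemma le_of_staircase (hf : Continuous f) (hτ : StrictMono τ) (hM : 0 < M) (hc : 0 ≤ c)
    (hclimb : ∀ k < m, c ≤ f (τ (M * k + M)) - f (τ (M * k)))
    (hdrop : ∀ k < m, ∀ j ≤ M, -(1 / 2) ≤ f (τ (M * k + j)) - f (τ (M * k)))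
    (hfine : ∀ i < M * m, ∀ r : ℚ, (r : ℝ) ∈ Icc (τ i) (τ (i + 1)) → -(1 / 2) ≤ f r - f (τ i))
    {a : ℕ} (ha : a < m) : ∀ s ∈ Icc (τ (M * a)) (τ (M * m)), f (τ 0) + a * c - 1 ≤ f s := by
  intro s hs
  have hmono : Monotone fun k => τ (M * k) :=
    hτ.monotone.comp fun _ _ h => Nat.mul_le_mul_left M h
  obtain ⟨k, ⟨hak, hkm⟩, hsk⟩ := hmono.exists_mem_Ico_mem_Icc ha hs
  have := le_of_mem_Icc_block hf hτ hM hclimb hdrop hfine hkm s (by simpa [Nat.mul_succ] using hsk)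
  have : (a : ℝ) * c ≤ k * c := by gcongr
  linarith

end Staircase

section Oscillation

variable {Ω : Type*} {B : ℝ → Ω → ℝ} {ε δ δ' : ℝ}

/-- Restricting to rational times keeps the event measurable; for continuous paths nothing is
lost. -/
def oscillationSet (B : ℝ → Ω → ℝ) (ε δ : ℝ) : Set Ω :=
  {ω | ∃ r q : ℚ, (r : ℝ) ∈ Icc 0 1 ∧ (q : ℝ) ∈ Icc 0 1 ∧ |(r : ℝ) - q| ≤ δ ∧
    ε < B r ω - B q ω}

lemma measurableSet_oscillationSet [MeasurableSpace Ω] (hB : ∀ t, Measurable (B t)) :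
    MeasurableSet (oscillationSet B ε δ) := by
  simp only [oscillationSet, ofPred_exists, ofPred_and]
  measurability

lemma oscillationSet_mono (h : δ ≤ δ') : oscillationSet B ε δ ⊆ oscillationSet B ε δ' :=
  fun _ ⟨r, q, hr, hq, hrq, hB⟩ => ⟨r, q, hr, hq, hrq.trans h, hB⟩

lemma iInter_oscillationSet_eq_empty (hB : ∀ ω, Continuous fun t => B t ω) (hε : 0 < ε) :
    ⋂ n : ℕ, oscillationSet B ε ((n : ℝ) + 1)⁻¹ = ∅ := by
  refine eq_empty_of_forall_notMem fun ω hω => ?_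
  obtain ⟨δ, hδ, hunif⟩ := Metric.uniformContinuousOn_iff.1
    (isCompact_Icc.uniformContinuousOn_of_continuous (hB ω).continuousOn) ε hε
  obtain ⟨n, hn⟩ := exists_nat_one_div_lt hδ
  obtain ⟨r, q, hr, hq, hrq, hjump⟩ := mem_iInter.1 hω n
  have hdist := hunif _ hr _ hq (by rw [Real.dist_eq]; linarith [one_div ((n : ℝ) + 1)])
  rw [Real.dist_eq] at hdist
  linarith [le_abs_self (B r ω - B q ω)]

lemma exists_measure_oscillationSet_lt [MeasurableSpace Ω] {P : Measure Ω} [IsFiniteMeasure P]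
    (hBm : ∀ t, Measurable (B t)) (hBc : ∀ ω, Continuous fun t => B t ω) (hε : 0 < ε)
    {η : ENNReal} (hη : 0 < η) : ∃ δ > 0, P (oscillationSet B ε δ) < η := by
  have hanti : Antitone fun n : ℕ => oscillationSet B ε ((n : ℝ) + 1)⁻¹ :=
    fun m n hmn => oscillationSet_mono (by gcongr)
  have hlim := tendsto_measure_iInter_atTop
    (fun n => (measurableSet_oscillationSet hBm).nullMeasurableSet) hanti
    ⟨0, measure_ne_top P _⟩
  rw [iInter_oscillationSet_eq_empty hBc hε, measure_empty] at hlim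
  obtain ⟨n, hn⟩ := (hlim.eventually (gt_mem_nhds hη)).exists
  exact ⟨_, by positivity, hn⟩

end Oscillation

lemma gaussianReal_Ici_one_pos : 0 < gaussianReal 0 1 (Ici 1) := by
  refine pos_iff_ne_zero.2 fun h => ?_
  simpa using gaussianReal_absolutelyContinuous' 0 one_ne_zero h

lemma ProbabilityTheory.iIndepFun.curry {Ω ι κ β : Type*} [MeasurableSpace Ω] [MeasurableSpace β]
    {P : Measure Ω} {X : ι → κ → Ω → β} (hX : ∀ i j, Measurable (X i j))
    (h : iIndepFun (fun p : ι × κ => X p.1 p.2) P) :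
    iIndepFun (fun i ω j => X i j ω) P := by
  have := h.isProbabilityMeasure
  have : ∀ i j, IsProbabilityMeasure (P.map (X i j)) :=
    fun i j => Measure.isProbabilityMeasure_map (hX i j).aemeasurable
  have hrow : ∀ i, P.map (fun ω j => X i j ω) = Measure.infinitePi fun j => P.map (X i j) := by
    intro i
    have hi := h.precomp (g := fun j : κ => (i, j)) (fun _ _ h => (Prod.mk.inj h).2)
    exact (iIndepFun_iff_map_fun_eq_infinitePi_map (by fun_prop)).1 hi
  rw [iIndepFun_iff_map_fun_eq_infinitePi_map (by fun_prop)]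
  simp_rw [hrow]
  have hcurry : (fun ω i j => X i j ω) = MeasurableEquiv.curry ι κ β ∘ fun ω p => X p.1 p.2 ω := rfl
  rw [hcurry, ← Measure.map_map (by fun_prop) (by fun_prop),
    (iIndepFun_iff_map_fun_eq_infinitePi_map (by fun_prop)).1 h]
  exact Measure.infinitePi_map_curry fun i j => P.map (X i j)

section Blocks

variable {Ω : Type*} {B : ℝ → Ω → ℝ}

def blockIncrements (B : ℝ → Ω → ℝ) (τ : ℕ → ℝ) (M k : ℕ) (ω : Ω) (j : Fin M) : ℝ :=
  B (τ (M * k + j + 1)) ω - B (τ (M * k + j)) ω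

def blockEvent (B : ℝ → Ω → ℝ) (τ : ℕ → ℝ) (M : ℕ) (c : ℝ) (k : ℕ) : Set Ω :=
  {ω | (∀ j ≤ M, -(1 / 2) ≤ B (τ (M * k + j)) ω - B (τ (M * k)) ω) ∧
    c ≤ B (τ (M * k + M)) ω - B (τ (M * k)) ω}

lemma sub_eq_sum_blockIncrements (B : ℝ → Ω → ℝ) (τ : ℕ → ℝ) {M j : ℕ} (hj : j ≤ M) (k : ℕ)
    (ω : Ω) : B (τ (M * k + j)) ω - B (τ (M * k)) ω =
      ∑ i ∈ Finset.univ.filter (fun i : Fin M => ↑i < j), blockIncrements B τ M k ω i := by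
  simp only [Finset.sum_filter, blockIncrements]
  rw [Fin.sum_univ_eq_sum_range (fun i => if i < j then
    B (τ (M * k + i + 1)) ω - B (τ (M * k + i)) ω else 0), ← Finset.sum_filter,
    show (Finset.range M).filter (· < j) = Finset.range j by ext; simp; omega]
  exact (Finset.sum_range_sub (fun i => B (τ (M * k + i)) ω) j).symm

lemma measurableSet_blockEvent (τ : ℕ → ℝ) (M : ℕ) (c : ℝ) (k : ℕ) :
    MeasurableSet[MeasurableSpace.pi.comap (blockIncrements B τ M k)] (blockEvent B τ M c k) := by
  have hsum : ∀ j ≤ M, Measurable[MeasurableSpace.pi.comap (blockIncrements B τ M k)]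
      fun ω => B (τ (M * k + j)) ω - B (τ (M * k)) ω := fun j hj => by
    simp_rw [sub_eq_sum_blockIncrements B τ hj]
    exact Finset.measurable_sum _ fun i _ =>
      (measurable_pi_apply i).comp (comap_measurable (blockIncrements B τ M k))
  simp only [blockEvent, ofPred_and, ofPred_forall]
  refine .inter (.iInter fun j => .iInter fun hj => ?_)
    (measurableSet_le measurable_const (hsum M le_rfl))
  exact measurableSet_le measurable_const (hsum j hj)

lemma le_of_mem_iInter_blockEvent {ω : Ω} (hcont : Continuous fun t => B t ω)
    (h₀ : B 0 ω = 0) {q M m : ℕ} {c : ℝ} (hM : 0 < M) (hm : M * m ≤ q) (hc : 0 ≤ c) (hblock : ω ∈ ⋂ k : Fin m, blockEvent B (fun i => i / q) M c k)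
    (hosc : ω ∉ oscillationSet B (1 / 2) (1 / q)) {a : ℕ} (ha : a < m) :
    ∀ s ∈ Icc ((M * a : ℕ) / q : ℝ) ((M * m : ℕ) / q), a * c - 1 ≤ B s ω := by
  have hq : (0 : ℝ) < q := by exact_mod_cast (show 0 < q by nlinarith)
  have hmq : (M * m : ℝ) ≤ q := by exact_mod_cast hm
  have hblock' : ∀ k < m, ω ∈ blockEvent B (fun i => i / q) M c k := fun k hk =>
    mem_iInter.1 hblock ⟨k, hk⟩
  have hfine : ∀ i < M * m, ∀ r : ℚ, (r : ℝ) ∈ Icc ((i : ℝ) / q) ((i + 1 : ℕ) / q) →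
      -(1 / 2) ≤ B r ω - B (i / q) ω := by
    intro i hi r ⟨hr₁, hr₂⟩
    have hi' : (i + 1 : ℝ) ≤ q := by
      have : ((i + 1 : ℕ) : ℝ) ≤ M * m := by exact_mod_cast hi
      push_cast at this; linarith
    push_cast at hr₂
    by_contra hlt
    refine hosc ⟨(i : ℚ) / q, r, ?_, ?_, ?_, ?_⟩ <;> push_cast
    · exact ⟨by positivity, (div_le_one hq).2 (by linarith)⟩
    · exact ⟨by linarith [show (0 : ℝ) ≤ i / q by positivity], hr₂.trans ((div_le_one hq).2 hi')⟩
    · rw [abs_sub_comm, abs_of_nonneg (by linarith)]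
      calc (r : ℝ) - i / q ≤ (i + 1) / q - i / q := by linarith
        _ = 1 / q := by ring
    · linarith
  have := le_of_staircase (f := fun t => B t ω) (τ := fun i => i / q) hcont
    (fun _ _ h => div_lt_div_of_pos_right (by exact_mod_cast h) hq) hM hc
    (fun k hk => (hblock' k hk).2) (fun k hk => (hblock' k hk).1) hfine ha
  simpa [h₀] using this

lemma forall_le_of_mem_iInter_blockEvent {ω : Ω} (hcont : Continuous fun t => B t ω)
    (h₀ : B 0 ω = 0) {N M : ℕ} {K : ℝ} (hK : 0 ≤ K) (hN : 0 < N) (hM : 0 < M)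
    (hblock : ω ∈ ⋂ k : Fin (6 * N),
      blockEvent B (fun i => i / (32 * N * M : ℕ)) M ((K + 1) / N) k)
    (hosc : ω ∉ oscillationSet B (1 / 2) (1 / (32 * N * M : ℕ))) :
    (∀ s ∈ Icc (0 : ℝ) (3 / 16), -1 ≤ B s ω) ∧ ∀ s ∈ Icc (1 / 32 : ℝ) (3 / 16), K ≤ B s ω := by
  have hN' : (0 : ℝ) < N := by exact_mod_cast hN
  have hM' : (0 : ℝ) < M := by exact_mod_cast hM
  have hstair := fun a (ha : a < 6 * N) => le_of_mem_iInter_blockEvent hcont h₀ hM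
    (by nlinarith) (by positivity) hblock hosc ha
  have hend : ((M * (6 * N) : ℕ) : ℝ) / (32 * N * M : ℕ) = 3 / 16 := by
    push_cast; field_simp; ring
  constructor
  · intro s hs
    simpa using hstair 0 (by omega) s (by rw [hend]; simpa using hs)
  · intro s hs
    have hstart : ((M * N : ℕ) : ℝ) / (32 * N * M : ℕ) = 1 / 32 := by
      push_cast; field_simp
    have := hstair N (by omega) s (by rwa [hstart, hend])
    have hNc : (N : ℝ) * ((K + 1) / N) = K + 1 := by field_simp
    linarith

end Blocks

namespace IsBrownianMotion

variable {Ω : Type*} [MeasurableSpace Ω] {P : Measure Ω} {B : ℝ → Ω → ℝ}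

lemma gaussianReal_Ici_one_le_measure_le_sub (hB : IsBrownianMotion P B) {a b c : ℝ}
    (ha : 0 ≤ a) (hab : a < b) (hc : c ≤ √(b - a)) :
    gaussianReal 0 1 (Ici 1) ≤ P {ω | c ≤ B b ω - B a ω} := by
  have hscale : gaussianReal 0 (b - a).toNNReal = (gaussianReal 0 1).map (√(b - a) * ·) := by
    rw [gaussianReal_map_const_mul, mul_zero, mul_one]
    congr
    ext
    simp [Real.sq_sqrt (sub_nonneg.2 hab.le), (sub_pos.2 hab).le]
  change _ ≤ P ((fun ω => B b ω - B a ω) ⁻¹' Ici c)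
  have hmeas : Measurable fun ω => B b ω - B a ω := (hB.measurable b).sub (hB.measurable a)
  rw [← Measure.map_apply hmeas measurableSet_Ici,
    hB.gaussian_increments a b ha hab.le, hscale,
    Measure.map_apply (measurable_const_mul _) measurableSet_Ici]
  exact measure_mono fun x (hx : 1 ≤ x) =>
    show c ≤ √(b - a) * x by nlinarith [Real.sqrt_nonneg (b - a)]

lemma iIndepFun_blockIncrements (hB : IsBrownianMotion P B) {τ : ℕ → ℝ} (hτ : Monotone τ)
    (hτ₀ : ∀ i, 0 ≤ τ i) (m M : ℕ) :
    iIndepFun (fun k : Fin m => blockIncrements B τ M k) P := by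
  have h := (hB.indep_increments (m * M) τ hτ hτ₀).precomp finProdFinEquiv.injective
  refine iIndepFun.curry (fun _ _ => (hB.measurable _).sub (hB.measurable _)) ?_
  convert h using 3 with p
  simp [blockIncrements, finProdFinEquiv_apply_val, add_comm]

lemma measure_iInter_blockEvent (hB : IsBrownianMotion P B) {τ : ℕ → ℝ} (hτ : Monotone τ)
    (hτ₀ : ∀ i, 0 ≤ τ i) (m M : ℕ) (c : ℝ) :
    P (⋂ k : Fin m, blockEvent B τ M c k) = ∏ k : Fin m, P (blockEvent B τ M c k) :=
  (hB.iIndepFun_blockIncrements hτ hτ₀ m M).meas_iInter fun k => measurableSet_blockEvent τ M c k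

lemma half_le_measure_blockEvent (hB : IsBrownianMotion P B) {q M k : ℕ} {c : ℝ} (hM : 0 < M)
    (hk : M * k + M ≤ q) (hc : c ≤ √(M / q))
    (hosc : P (oscillationSet B (1 / 2) (M / q)) ≤ gaussianReal 0 1 (Ici 1) / 2) :
    gaussianReal 0 1 (Ici 1) / 2 ≤ P (blockEvent B (fun i => i / q) M c k) := by
  have hq : (0 : ℝ) < q := by exact_mod_cast (show 0 < q by omega)
  have hqk : (M * k + M : ℝ) ≤ q := by exact_mod_cast hk
  set A := {ω | c ≤ B ((M * k + M : ℕ) / q) ω - B ((M * k : ℕ) / q) ω}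
  have hA : gaussianReal 0 1 (Ici 1) ≤ P A := by
    refine hB.gaussianReal_Ici_one_le_measure_le_sub (by positivity) ?_ ?_
    · gcongr; exact_mod_cast (show M * k < M * k + M by omega)
    · convert hc using 2; push_cast; ring
  have hsub : A \ oscillationSet B (1 / 2) (M / q) ⊆ blockEvent B (fun i => i / q) M c k := by
    rintro ω ⟨hω, hosc⟩
    refine ⟨fun j hj => ?_, hω⟩
    by_contra hlt
    have hj' : (j : ℝ) ≤ M := by exact_mod_cast hj
    refine hosc ⟨(M * k : ℕ) / q, (M * k + j : ℕ) / q, ?_, ?_, ?_, ?_⟩ <;> push_cast at hlt ⊢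
    · exact ⟨by positivity, (div_le_one hq).2 (by linarith)⟩
    · exact ⟨by positivity, (div_le_one hq).2 (by linarith)⟩
    · rw [← sub_div, abs_div, abs_of_pos hq]; gcongr; rw [abs_le]; constructor <;> linarith
    · linarith
  calc gaussianReal 0 1 (Ici 1) / 2
      = gaussianReal 0 1 (Ici 1) - gaussianReal 0 1 (Ici 1) / 2 := (ENNReal.sub_half (by simp)).symm
    _ ≤ P A - P (oscillationSet B (1 / 2) (M / q)) := tsub_le_tsub hA hosc
    _ ≤ P (A \ oscillationSet B (1 / 2) (M / q)) := le_measure_sdiff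
    _ ≤ _ := measure_mono hsub

lemma pow_le_measure_iInter_blockEvent (hB : IsBrownianMotion P B) {q M m : ℕ} {c : ℝ}
    (hM : 0 < M) (hm : M * m ≤ q) (hc : c ≤ √(M / q))
    (hosc : P (oscillationSet B (1 / 2) (M / q)) ≤ gaussianReal 0 1 (Ici 1) / 2) :
    (gaussianReal 0 1 (Ici 1) / 2) ^ m ≤ P (⋂ k : Fin m, blockEvent B (fun i => i / q) M c k) := by
  rw [hB.measure_iInter_blockEvent (fun _ _ h => by gcongr) (fun _ => by positivity)]
  calc _ = ∏ _k : Fin m, gaussianReal 0 1 (Ici 1) / 2 := by simp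
    _ ≤ _ := Finset.prod_le_prod' fun k _ =>
      hB.half_le_measure_blockEvent hM (by nlinarith [k.isLt]) hc hosc

theorem measure_pos_forall_Icc_le (hB : IsBrownianMotion P B) {K : ℝ} (hK : 0 ≤ K) :
    0 < P {ω | (∀ s ∈ Icc (0 : ℝ) (3 / 16), -1 ≤ B s ω) ∧
      ∀ s ∈ Icc (1 / 32 : ℝ) (3 / 16), K ≤ B s ω} := by
  have := hB.isProbability
  have hp : 0 < gaussianReal 0 1 (Ici 1) / 2 := ENNReal.half_pos gaussianReal_Ici_one_pos.ne'
  obtain ⟨δ₁, hδ₁, hosc₁⟩ :=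
    exists_measure_oscillationSet_lt (P := P) hB.measurable hB.continuous_paths one_half_pos hp
  obtain ⟨N, hN⟩ := exists_nat_ge (max (32 * (K + 1) ^ 2) δ₁⁻¹)
  obtain ⟨δ₂, hδ₂, hosc₂⟩ := exists_measure_oscillationSet_lt (P := P) hB.measurable
    hB.continuous_paths one_half_pos (ENNReal.pow_pos hp (6 * N))
  obtain ⟨M, hM⟩ := exists_nat_ge δ₂⁻¹
  have hN₁ : 32 * (K + 1) ^ 2 ≤ N := (le_max_left _ _).trans hN
  have hN₀ : (1 : ℝ) ≤ N := by nlinarith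
  have hM₀ : (0 : ℝ) < M := (inv_pos.2 hδ₂).trans_le hM
  set q := 32 * N * M
  have hq : (q : ℝ) = 32 * N * M := by push_cast [q]; ring
  have hMq : (M : ℝ) / q = (32 * (N : ℝ))⁻¹ := by rw [hq]; field_simp
  set G := ⋂ k : Fin (6 * N), blockEvent B (fun i => i / q) M ((K + 1) / N) k
  have hG : (gaussianReal 0 1 (Ici 1) / 2) ^ (6 * N) ≤ P G := by
    refine hB.pow_le_measure_iInter_blockEvent (by exact_mod_cast hM₀)
      (show M * (6 * N) ≤ 32 * N * M by nlinarith) ?_ ?_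
    · rw [hMq, Real.le_sqrt (div_nonneg (by linarith) (by linarith)) (by positivity), div_pow,
        inv_eq_one_div, div_le_div_iff₀ (by positivity) (by positivity)]
      nlinarith
    · refine (measure_mono (oscillationSet_mono ?_)).trans hosc₁.le
      rw [hMq, inv_le_comm₀ (by positivity) hδ₁]
      linarith [le_max_right (32 * (K + 1) ^ 2) δ₁⁻¹]
  have hD : P (oscillationSet B (1 / 2) (1 / q)) < P G := by
    refine ((measure_mono (oscillationSet_mono ?_)).trans_lt hosc₂).trans_le hG
    rw [one_div_le (by rw [hq]; positivity) hδ₂, one_div, hq]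
    nlinarith
  calc 0 < P G - P (oscillationSet B (1 / 2) (1 / q)) := tsub_pos_of_lt hD
    _ ≤ P (G \ oscillationSet B (1 / 2) (1 / q)) := le_measure_sdiff
    _ ≤ _ := measure_mono fun ω ⟨hblock, hosc⟩ =>
      forall_le_of_mem_iInter_blockEvent (hB.continuous_paths ω) (hB.start ω) hK
        (by exact_mod_cast hN₀) (by exact_mod_cast hM₀) hblock hosc

end IsBrownianMotion

/-- For `M(t) = ∫_0^t cos(π (t-s)) B_s ds` and any `L > 0`, with positive
probability `M(t) ≥ L` for all `t ∈ [1/16, 3/16]`. -/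
theorem convolution_brownian_large_with_positive_probability
    {Ω : Type*} [MeasurableSpace Ω]
    (P : Measure Ω) (B : ℝ → Ω → ℝ) (hB : IsBrownianMotion P B)
    (L : ℝ) (hL : 0 < L) :
    0 < P {ω | ∀ t ∈ Set.Icc (1 / 16 : ℝ) (3 / 16),
      L ≤ ∫ s in (0 : ℝ)..t, Real.cos (Real.pi * (t - s)) * B s ω} := by
  refine (hB.measure_pos_forall_Icc_le (K := 64 * L + 2) (by positivity)).trans_le
    (measure_mono fun ω ⟨hlow, hhigh⟩ t ht => ?_)
  have := le_integral_cos_mul (hB.continuous_paths ω) (by positivity) hlow hhigh ht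
  linarith
end
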